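/- arXiv:2307.15996 — 4 statements merged into one kernel-verified Lean document; each statement's English description precedes it below -/
import Mathlib

section
/- Every domino (2-omino) tiling of the 8×8 grid contains two dominoes whose union is a 2×2 square. Equivalently, there is no tiling of the 8×8 grid by 1×2 and 2×1 dominoes in which no two dominoes form a 2×2 square. -/
/-- Orthogonal adjacency of cells in the grid (coordinates in ℕ). -/
def Adj (p q : ℕ × ℕ) : Prop :=
  (p.1 = q.1 ∧ (p.2 + 1 = q.2 ∨ q.2 + 1 = p.2)) ∨
  (p.2 = q.2 ∧ (p.1 + 1 = q.1 ∨ q.1 + 1 = p.1))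

/-- A finite set of cells is connected (under orthogonal adjacency, staying inside the set). -/
def ConnectedIn (S : Finset (ℕ × ℕ)) : Prop :=
  ∀ p ∈ S, ∀ q ∈ S, Relation.ReflTransGen (fun a b => a ∈ S ∧ b ∈ S ∧ Adj a b) p q

/-- The cells of the m × n grid. -/
def gridCells (m n : ℕ) : Finset (ℕ × ℕ) := Finset.range m ×ˢ Finset.range n

/-- A tiling of the m × n grid by t-ominoes: a partition of the cells into
connected pieces of size t. -/
structure Tiling (m n t : ℕ) where
  tiles : Finset (Finset (ℕ × ℕ))
  covers : ∀ c ∈ gridCells m n, ∃! T, T ∈ tiles ∧ c ∈ T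
  subset : ∀ T ∈ tiles, T ⊆ gridCells m n
  card_tile : ∀ T ∈ tiles, T.card = t
  conn : ∀ T ∈ tiles, ConnectedIn T

/-- Recombination adjacency in the metagraph: the two tilings differ on exactly two tiles. -/
def MetaAdj {m n t : ℕ} (T₁ T₂ : Tiling m n t) : Prop :=
  (T₁.tiles \ T₂.tiles).card = 2 ∧ (T₂.tiles \ T₁.tiles).card = 2

/-- A tiling is locked if no two distinct tiles can be merged and re-split differently:
the only partition of the union of two tiles into two disjoint connected t-cell sets is
the original one. -/
def Locked {m n t : ℕ} (T : Tiling m n t) : Prop :=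
  ∀ T₁ ∈ T.tiles, ∀ T₂ ∈ T.tiles, T₁ ≠ T₂ →
    ∀ S₁ S₂ : Finset (ℕ × ℕ), S₁.card = t → S₂.card = t →
      ConnectedIn S₁ → ConnectedIn S₂ → Disjoint S₁ S₂ → S₁ ∪ S₂ = T₁ ∪ T₂ →
      ({S₁, S₂} : Finset (Finset (ℕ × ℕ))) = {T₁, T₂}

-- helpers
lemma mem_grid {a b : ℕ} (ha : a < 8) (hb : b < 8) : (a, b) ∈ gridCells 8 8 := by
  simp [gridCells, ha, hb]

lemma grid_lt {a b : ℕ} (h : (a, b) ∈ gridCells 8 8) : a < 8 ∧ b < 8 := by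
  simpa [gridCells] using h

lemma adj_irrefl (p : ℕ × ℕ) : ¬ Adj p p := by
  unfold Adj; omega

lemma adj_swap {p q : ℕ × ℕ} (h : Adj p q) : Adj p.swap q.swap := by
  unfold Adj at *; simp [Prod.swap] at *; tauto

lemma adj_of_conn {c d : ℕ × ℕ} (hne : c ≠ d) (h : ConnectedIn {c, d}) : Adj c d := by
  have hr := h c (by simp) d (by simp)
  rcases Relation.ReflTransGen.cases_head hr with heq | ⟨b, ⟨_, hb2, hadj⟩, _⟩
  · exact absurd heq hne
  · have : b = c ∨ b = d := by simpa using hb2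
    rcases this with rfl | rfl
    · exact absurd hadj (adj_irrefl _)
    · exact hadj

lemma pair_ne {a b c d : ℕ} (h : ¬ (a = c ∧ b = d)) : (a, b) ≠ (c, d) := by
  simpa [Prod.ext_iff] using h

lemma pair_eq {a b c d : ℕ} (h : (a, b) = (c, d)) : a = c ∧ b = d := by
  simpa [Prod.ext_iff] using h

lemma cand (M : ℕ × ℕ → ℕ × ℕ)
    (h1 : ∀ c ∈ gridCells 8 8, M c ∈ gridCells 8 8)
    (h2 : ∀ c ∈ gridCells 8 8, Adj c (M c))
    (a b : ℕ) (ha : a < 8) (hb : b < 8) :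
    (b + 2 ≤ 8 ∧ M (a, b) = (a, b + 1)) ∨ (a + 2 ≤ 8 ∧ M (a, b) = (a + 1, b)) ∨
    (1 ≤ b ∧ M (a, b) = (a, b - 1)) ∨ (1 ≤ a ∧ M (a, b) = (a - 1, b)) := by
  have hG := mem_grid ha hb
  have hadj := h2 _ hG
  have hmem := h1 _ hG
  rcases hM : M (a, b) with ⟨x, y⟩
  rw [hM] at hadj hmem
  have hxy := grid_lt hmem
  unfold Adj at hadj
  simp only [Prod.ext_iff]
  simp at hadj
  omega

section chain

variable (M : ℕ × ℕ → ℕ × ℕ)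
  (h1 : ∀ c ∈ gridCells 8 8, M c ∈ gridCells 8 8)
  (h2 : ∀ c ∈ gridCells 8 8, Adj c (M c))
  (h3 : ∀ c ∈ gridCells 8 8, M (M c) = c)
  (hS : ∀ a ∈ gridCells 8 8, ∀ b ∈ gridCells 8 8, b ≠ a → b ≠ M a →
      ∀ i j : ℕ, ({a, M a, b, M b} : Finset (ℕ × ℕ)) ≠
        {(i, j), (i + 1, j), (i, j + 1), (i + 1, j + 1)})

include h1 h2 h3 hS in
lemma chain (h0 : M (0, 0) = (1, 0)) : False := by
  -- the staircase invariant
  have key : ∀ k, k ≤ 5 → M (k, k) = (k + 1, k) ∧ M (k, k + 1) = (k, k + 2) := by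
    intro k
    induction k with
    | zero =>
      intro _
      refine ⟨h0, ?_⟩
      -- force M (0,1) = (0,2)
      rcases cand M h1 h2 0 1 (by omega) (by omega) with ⟨_, h⟩ | ⟨_, h⟩ | ⟨_, h⟩ | ⟨hb, _⟩
      · exact h
      · -- (1,1): square with {(0,0),(1,0)}
        exfalso
        refine hS (0,0) (mem_grid (by omega) (by omega)) (0,1) (mem_grid (by omega) (by omega))
          (pair_ne (by omega)) (by rw [h0]; exact pair_ne (by omega)) 0 0 ?_
        rw [h0, h]
        try (ext ⟨u, v⟩; simp only [Finset.mem_insert, Finset.mem_singleton, Prod.mk.injEq]; omega)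
      · -- (0,0): taken
        exfalso
        have h' : M (0, 1) = (0, 0) := by rw [h]; try (congr 1 <;> omega)
        have := h3 (0, 1) (mem_grid (by omega) (by omega))
        rw [h', h0] at this
        exact absurd (pair_eq this) (by omega)
      · omega
    | succ k ih =>
      intro hk5
      obtain ⟨Hh, Hv⟩ := ih (by omega)
      have Hh' : M (k + 1, k) = (k, k) := by
        have := h3 (k, k) (mem_grid (by omega) (by omega)); rwa [Hh] at this
      have Hv' : M (k, k + 2) = (k, k + 1) := by
        have := h3 (k, k + 1) (mem_grid (by omega) (by omega)); rwa [Hv] at this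
      have step1 : M (k + 1, k + 1) = (k + 2, k + 1) := by
        rcases cand M h1 h2 (k+1) (k+1) (by omega) (by omega) with
          ⟨_, h⟩ | ⟨_, h⟩ | ⟨_, h⟩ | ⟨_, h⟩
        · -- (k+1, k+2): square with vertical tile {(k,k+1),(k,k+2)}
          exfalso
          refine hS (k, k+1) (mem_grid (by omega) (by omega)) (k+1, k+1)
            (mem_grid (by omega) (by omega)) (pair_ne (by omega))
            (by rw [Hv]; exact pair_ne (by omega)) k (k+1) ?_
          rw [Hv, h]
          try (ext ⟨u, v⟩; simp only [Finset.mem_insert, Finset.mem_singleton, Prod.mk.injEq]; omega)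
        · exact h
        · -- (k+1, k): taken
          exfalso
          have h' : M (k+1, k+1) = (k+1, k) := by rw [h]; try (congr 1 <;> omega)
          have := h3 (k+1, k+1) (mem_grid (by omega) (by omega))
          rw [h', Hh'] at this
          exact absurd (pair_eq this) (by omega)
        · -- (k, k+1): taken
          exfalso
          have h' : M (k+1, k+1) = (k, k+1) := by rw [h]; try (congr 1 <;> omega)
          have := h3 (k+1, k+1) (mem_grid (by omega) (by omega))
          rw [h', Hv] at this
          exact absurd (pair_eq this) (by omega)
      have step1' : M (k + 2, k + 1) = (k + 1, k + 1) := by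
        have := h3 (k+1, k+1) (mem_grid (by omega) (by omega)); rwa [step1] at this
      refine ⟨step1, ?_⟩
      -- force M (k+1, k+2) = (k+1, k+3)
      rcases cand M h1 h2 (k+1) (k+2) (by omega) (by omega) with
        ⟨_, h⟩ | ⟨_, h⟩ | ⟨_, h⟩ | ⟨_, h⟩
      · exact h
      · -- (k+2, k+2): square with {(k+1,k+1),(k+2,k+1)}
        exfalso
        refine hS (k+1, k+1) (mem_grid (by omega) (by omega)) (k+1, k+2)
          (mem_grid (by omega) (by omega)) (pair_ne (by omega))
          (by rw [step1]; exact pair_ne (by omega)) (k+1) (k+1) ?_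
        rw [step1, h]
        try (ext ⟨u, v⟩; simp only [Finset.mem_insert, Finset.mem_singleton, Prod.mk.injEq]; omega)
      · -- (k+1, k+1): taken
        exfalso
        have h' : M (k+1, k+2) = (k+1, k+1) := by rw [h]; try (congr 1 <;> omega)
        have := h3 (k+1, k+2) (mem_grid (by omega) (by omega))
        rw [h', step1] at this
        exact absurd (pair_eq this) (by omega)
      · -- (k, k+2): taken
        exfalso
        have h' : M (k+1, k+2) = (k, k+2) := by rw [h]; try (congr 1 <;> omega)
        have := h3 (k+1, k+2) (mem_grid (by omega) (by omega))
        rw [h', Hv'] at this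
        exact absurd (pair_eq this) (by omega)
  obtain ⟨Hh, Hv⟩ := key 5 (le_refl 5)
  have Hv' : M (5, 7) = (5, 6) := by
    have := h3 (5, 6) (mem_grid (by omega) (by omega)); rwa [Hv] at this
  -- force M (6,6) = (7,6)
  have step1 : M (6, 6) = (7, 6) := by
    rcases cand M h1 h2 6 6 (by omega) (by omega) with ⟨_, h⟩ | ⟨_, h⟩ | ⟨_, h⟩ | ⟨_, h⟩
    · -- (6,7): square with {(5,6),(5,7)}
      exfalso
      refine hS (5, 6) (mem_grid (by omega) (by omega)) (6, 6)
        (mem_grid (by omega) (by omega)) (pair_ne (by omega))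
        (by rw [Hv]; exact pair_ne (by omega)) 5 6 ?_
      rw [Hv, h]
      try (ext ⟨u, v⟩; simp only [Finset.mem_insert, Finset.mem_singleton, Prod.mk.injEq]; omega)
    · exact h
    · -- (6,5): taken
      exfalso
      have Hh' : M (6, 5) = (5, 5) := by
        have := h3 (5, 5) (mem_grid (by omega) (by omega)); rwa [Hh] at this
      have h' : M (6, 6) = (6, 5) := by rw [h]; try (congr 1 <;> omega)
      have := h3 (6, 6) (mem_grid (by omega) (by omega))
      rw [h', Hh'] at this
      exact absurd (pair_eq this) (by omega)
    · -- (5,6): taken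
      exfalso
      have h' : M (6, 6) = (5, 6) := by rw [h]; try (congr 1 <;> omega)
      have := h3 (6, 6) (mem_grid (by omega) (by omega))
      rw [h', Hv] at this
      exact absurd (pair_eq this) (by omega)
  -- now (6,7) has no legal partner
  rcases cand M h1 h2 6 7 (by omega) (by omega) with ⟨hb, _⟩ | ⟨_, h⟩ | ⟨_, h⟩ | ⟨_, h⟩
  · omega
  · -- (7,7): square with {(6,6),(7,6)}
    refine hS (6, 6) (mem_grid (by omega) (by omega)) (6, 7)
      (mem_grid (by omega) (by omega)) (pair_ne (by omega))
      (by rw [step1]; exact pair_ne (by omega)) 6 6 ?_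
    rw [step1, h]
    try (ext ⟨u, v⟩; simp only [Finset.mem_insert, Finset.mem_singleton, Prod.mk.injEq]; omega)
  · -- (6,6): taken
    have h' : M (6, 7) = (6, 6) := by rw [h]; try (congr 1 <;> omega)
    have := h3 (6, 7) (mem_grid (by omega) (by omega))
    rw [h', step1] at this
    exact absurd (pair_eq this) (by omega)
  · -- (5,7): taken
    have h' : M (6, 7) = (5, 7) := by rw [h]; try (congr 1 <;> omega)
    have := h3 (6, 7) (mem_grid (by omega) (by omega))
    rw [h', Hv'] at this
    exact absurd (pair_eq this) (by omega)

end chain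

/-- Every domino tiling of the 8×8 grid contains two dominoes whose union is a 2×2 square. -/
theorem stmt_0 (T : Tiling 8 8 2) :
    ∃ T₁ ∈ T.tiles, ∃ T₂ ∈ T.tiles, T₁ ≠ T₂ ∧
      ∃ i j : ℕ, T₁ ∪ T₂ =
        ({(i, j), (i + 1, j), (i, j + 1), (i + 1, j + 1)} : Finset (ℕ × ℕ)) := by
  by_contra hcon
  push_neg at hcon
  -- extract the matching function
  have Hpair : ∀ c : ℕ × ℕ, ∃ d, c ∈ gridCells 8 8 → c ≠ d ∧ {c, d} ∈ T.tiles := by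
    intro c
    by_cases hc : c ∈ gridCells 8 8
    · obtain ⟨Tc, ⟨hTc, hcTc⟩, _⟩ := T.covers c hc
      obtain ⟨x, y, hxy, rfl⟩ := Finset.card_eq_two.mp (T.card_tile Tc hTc)
      have : c = x ∨ c = y := by simpa using hcTc
      rcases this with rfl | rfl
      · exact ⟨y, fun _ => ⟨hxy, hTc⟩⟩
      · exact ⟨x, fun _ => ⟨hxy.symm, by rwa [Finset.pair_comm]⟩⟩
    · exact ⟨c, fun h => absurd h hc⟩
  choose M hM using Hpair
  have hMne : ∀ c ∈ gridCells 8 8, c ≠ M c := fun c hc => (hM c hc).1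
  have hMt : ∀ c ∈ gridCells 8 8, ({c, M c} : Finset (ℕ × ℕ)) ∈ T.tiles :=
    fun c hc => (hM c hc).2
  have h1 : ∀ c ∈ gridCells 8 8, M c ∈ gridCells 8 8 := fun c hc =>
    T.subset _ (hMt c hc) (by simp)
  have h2 : ∀ c ∈ gridCells 8 8, Adj c (M c) := fun c hc =>
    adj_of_conn (hMne c hc) (T.conn _ (hMt c hc))
  have h3 : ∀ c ∈ gridCells 8 8, M (M c) = c := by
    intro c hc
    have hMc := h1 c hc
    obtain ⟨Tc, _, huniq⟩ := T.covers (M c) hMc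
    have e1 : ({M c, M (M c)} : Finset (ℕ × ℕ)) = Tc :=
      huniq _ ⟨hMt _ hMc, by simp⟩
    have e2 : ({c, M c} : Finset (ℕ × ℕ)) = Tc :=
      huniq _ ⟨hMt c hc, by simp⟩
    have : M (M c) ∈ ({c, M c} : Finset (ℕ × ℕ)) := by
      rw [e2, ← e1]; simp
    rcases Finset.mem_insert.mp this with h | h
    · exact h
    · exact absurd (Finset.mem_singleton.mp h).symm (hMne _ hMc)
  have hS : ∀ a ∈ gridCells 8 8, ∀ b ∈ gridCells 8 8, b ≠ a → b ≠ M a →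
      ∀ i j : ℕ, ({a, M a, b, M b} : Finset (ℕ × ℕ)) ≠
        {(i, j), (i + 1, j), (i, j + 1), (i + 1, j + 1)} := by
    intro a ha b hb hba hbMa i j heq
    have hne : ({a, M a} : Finset (ℕ × ℕ)) ≠ {b, M b} := by
      intro he
      have : b ∈ ({a, M a} : Finset (ℕ × ℕ)) := by rw [he]; simp
      rcases Finset.mem_insert.mp this with h | h
      · exact hba h
      · exact hbMa (Finset.mem_singleton.mp h)
    refine hcon {a, M a} (hMt a ha) {b, M b} (hMt b hb) hne i j ?_
    rw [← heq]
    ext p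
    simp [Finset.mem_union, Finset.mem_insert]
    tauto
  -- corner analysis
  rcases cand M h1 h2 0 0 (by omega) (by omega) with ⟨_, h⟩ | ⟨_, h⟩ | ⟨hb, _⟩ | ⟨hb, _⟩
  · -- M (0,0) = (0,1): use the transposed matching
    set M' : ℕ × ℕ → ℕ × ℕ := fun c => (M c.swap).swap with hM'
    have hswapG : ∀ c : ℕ × ℕ, c ∈ gridCells 8 8 → c.swap ∈ gridCells 8 8 := by
      rintro ⟨a, b⟩ hab
      obtain ⟨ha, hb⟩ := grid_lt hab
      exact mem_grid hb ha
    have h1' : ∀ c ∈ gridCells 8 8, M' c ∈ gridCells 8 8 := fun c hc =>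
      hswapG _ (h1 _ (hswapG c hc))
    have h2' : ∀ c ∈ gridCells 8 8, Adj c (M' c) := by
      intro c hc
      have := adj_swap (h2 c.swap (hswapG c hc))
      rwa [Prod.swap_swap] at this
    have h3' : ∀ c ∈ gridCells 8 8, M' (M' c) = c := by
      intro c hc
      simp only [hM', Prod.swap_swap]
      rw [h3 c.swap (hswapG c hc), Prod.swap_swap]
    have hS' : ∀ a ∈ gridCells 8 8, ∀ b ∈ gridCells 8 8, b ≠ a → b ≠ M' a →
        ∀ i j : ℕ, ({a, M' a, b, M' b} : Finset (ℕ × ℕ)) ≠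
          {(i, j), (i + 1, j), (i, j + 1), (i + 1, j + 1)} := by
      intro a ha b hb hba hbMa i j heq
      refine hS a.swap (hswapG a ha) b.swap (hswapG b hb)
        (fun he => hba (Prod.swap_injective he))
        (fun he => hbMa (by rw [hM']; simp only; rw [← he, Prod.swap_swap])) j i ?_
      have himg := congrArg (Finset.image Prod.swap) heq
      simp only [Finset.image_insert, Finset.image_singleton] at himg
      simp only [hM', Prod.swap_swap] at himg
      rw [himg]
      ext ⟨u, v⟩
      simp only [Finset.mem_insert, Finset.mem_singleton, Prod.mk.injEq, Prod.swap_prod_mk]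
      constructor <;> (intro hcase; omega)
    have h0' : M' (0, 0) = (1, 0) := by
      simp only [hM']
      have : (0, 0) = Prod.swap (0, 0) := rfl
      rw [← this, h]; rfl
    exact chain M' h1' h2' h3' hS' h0'
  · exact chain M h1 h2 h3 hS h
  · omega
  · omega
end

section
/- For any positive integers m and n, the metagraph of domino tilings of the m×n grid under recombination moves is connected. -/
namespace Stmt2Aux

/-- Horizontal domino with left cell (r,c). -/
def Hd (r c : ℕ) : Finset (ℕ × ℕ) := {(r, c), (r, c + 1)}
/-- Vertical domino with top cell (r,c). -/
def Vd (r c : ℕ) : Finset (ℕ × ℕ) := {(r, c), (r + 1, c)}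
/-- Containment in the lower-right quadrant at (r,c). -/
def Quad (r c : ℕ) (W : Finset (ℕ × ℕ)) : Prop := ∀ p ∈ W, r ≤ p.1 ∧ c ≤ p.2

lemma mem_grid {m n : ℕ} {p : ℕ × ℕ} : p ∈ gridCells m n ↔ p.1 < m ∧ p.2 < n := by
  simp [gridCells]

lemma adj_irrefl (p : ℕ × ℕ) : ¬ Adj p p := by simp [Adj]

lemma adj_cases {x y a b : ℕ} (h : Adj (x, y) (a, b)) :
    (a = x ∧ b = y + 1) ∨ (a = x ∧ b + 1 = y) ∨ (a = x + 1 ∧ b = y) ∨ (a + 1 = x ∧ b = y) := by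
  simp [Adj] at h; omega

lemma mem_Hd {r c : ℕ} {p : ℕ × ℕ} : p ∈ Hd r c ↔ p = (r, c) ∨ p = (r, c + 1) := by simp [Hd]
lemma mem_Vd {r c : ℕ} {p : ℕ × ℕ} : p ∈ Vd r c ↔ p = (r, c) ∨ p = (r + 1, c) := by simp [Vd]

lemma card_Hd (r c : ℕ) : (Hd r c).card = 2 := by
  rw [Hd, Finset.card_pair (by simp)]

lemma card_Vd (r c : ℕ) : (Vd r c).card = 2 := by
  rw [Vd, Finset.card_pair (by simp)]

lemma conn_Hd (r c : ℕ) : ConnectedIn (Hd r c) := by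
  intro p hp q hq
  rcases mem_Hd.mp hp with rfl | rfl <;> rcases mem_Hd.mp hq with rfl | rfl
  · exact .refl
  · exact .single ⟨by simp [Hd], by simp [Hd], Or.inl ⟨rfl, Or.inl rfl⟩⟩
  · exact .single ⟨by simp [Hd], by simp [Hd], Or.inl ⟨rfl, Or.inr rfl⟩⟩
  · exact .refl

lemma conn_Vd (r c : ℕ) : ConnectedIn (Vd r c) := by
  intro p hp q hq
  rcases mem_Vd.mp hp with rfl | rfl <;> rcases mem_Vd.mp hq with rfl | rfl
  · exact .refl
  · exact .single ⟨by simp [Vd], by simp [Vd], Or.inr ⟨rfl, Or.inl rfl⟩⟩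
  · exact .single ⟨by simp [Vd], by simp [Vd], Or.inr ⟨rfl, Or.inr rfl⟩⟩
  · exact .refl

lemma Hd_ne_Vd (r c r' c' : ℕ) : Hd r c ≠ Vd r' c' := by
  intro h
  have h1 : (r, c) ∈ Vd r' c' := h ▸ (by simp [Hd])
  have h2 : (r, c + 1) ∈ Vd r' c' := h ▸ (by simp [Hd])
  simp [Vd, Prod.ext_iff] at h1 h2; omega

lemma Vd_ne_Hd (r c r' c' : ℕ) : Vd r c ≠ Hd r' c' := fun h => Hd_ne_Vd r' c' r c h.symm

lemma Hd_ne_Hd {r c r' c' : ℕ} (h : r ≠ r') : Hd r c ≠ Hd r' c' := by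
  intro he
  have h1 : (r, c) ∈ Hd r' c' := he ▸ (by simp [Hd])
  simp [Hd, Prod.ext_iff] at h1; omega

lemma Vd_ne_Vd {r c r' c' : ℕ} (h : c ≠ c') : Vd r c ≠ Vd r' c' := by
  intro he
  have h1 : (r, c) ∈ Vd r' c' := he ▸ (by simp [Vd])
  simp [Vd, Prod.ext_iff] at h1; omega

lemma quad_Hd {r c r' c' : ℕ} (h1 : r ≤ r') (h2 : c ≤ c') : Quad r c (Hd r' c') := by
  rintro ⟨a, b⟩ hp
  simp [Hd, Prod.ext_iff] at hp
  constructor <;> omega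

lemma quad_Vd {r c r' c' : ℕ} (h1 : r ≤ r') (h2 : c ≤ c') : Quad r c (Vd r' c') := by
  rintro ⟨a, b⟩ hp
  simp [Vd, Prod.ext_iff] at hp
  constructor <;> omega

lemma quad_anti {r c r' c' : ℕ} {W : Finset (ℕ × ℕ)} (h1 : r ≤ r') (h2 : c ≤ c')
    (h : Quad r' c' W) : Quad r c W := by
  intro p hp
  have := h p hp
  omega

lemma not_quad_Vd {r c r' c' : ℕ} (h : r' < r ∨ c' < c) : ¬ Quad r c (Vd r' c') := by
  intro hq
  have := hq (r', c') (by simp [Vd])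
  simp at this; omega

lemma not_quad_Hd {r c r' c' : ℕ} (h : r' < r ∨ c' < c) : ¬ Quad r c (Hd r' c') := by
  intro hq
  have := hq (r', c') (by simp [Hd])
  simp at this; omega

lemma tiling_ext {m n t : ℕ} {T₁ T₂ : Tiling m n t} (h : T₁.tiles = T₂.tiles) : T₁ = T₂ := by
  cases T₁; cases T₂
  dsimp at h
  subst h
  rfl

lemma tile_eq {m n t : ℕ} (T : Tiling m n t) {W W' : Finset (ℕ × ℕ)} (hW : W ∈ T.tiles)
    (hW' : W' ∈ T.tiles) {p : ℕ × ℕ} (hp : p ∈ W) (hp' : p ∈ W') : W = W' := by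
  have hg : p ∈ gridCells m n := T.subset W hW hp
  obtain ⟨U, -, hu⟩ := T.covers p hg
  rw [hu W ⟨hW, hp⟩, hu W' ⟨hW', hp'⟩]

lemma partner {m n : ℕ} (T : Tiling m n 2) {W : Finset (ℕ × ℕ)} (hW : W ∈ T.tiles)
    {p : ℕ × ℕ} (hp : p ∈ W) : ∃ q, Adj p q ∧ W = {p, q} := by
  obtain ⟨a, b, hab, rfl⟩ := Finset.card_eq_two.mp (T.card_tile _ hW)
  have hconn := T.conn _ hW
  rcases Finset.mem_insert.mp hp with rfl | hb
  · have h := hconn p hp b (by simp)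
    rcases Relation.ReflTransGen.cases_head h with rfl | ⟨x, ⟨-, hx, hadj⟩, -⟩
    · exact absurd rfl hab
    · rcases (by simpa using hx : x = p ∨ x = b) with rfl | rfl
      · exact absurd hadj (adj_irrefl _)
      · exact ⟨x, hadj, rfl⟩
  · have hb' : p = b := by simpa using hb
    subst hb'
    have h := hconn p hp a (by simp)
    rcases Relation.ReflTransGen.cases_head h with rfl | ⟨x, ⟨-, hx, hadj⟩, -⟩
    · exact absurd rfl hab.symm
    · rcases (by simpa using hx : x = a ∨ x = p) with rfl | rfl
      · exact ⟨x, hadj, by rw [Finset.pair_comm]⟩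
      · exact absurd hadj (adj_irrefl _)


lemma flip {m n : ℕ} (T : Tiling m n 2) {A B S₁ S₂ : Finset (ℕ × ℕ)}
    (hA : A ∈ T.tiles) (hB : B ∈ T.tiles) (hAB : A ≠ B)
    (hu : S₁ ∪ S₂ = A ∪ B) (hd : Disjoint S₁ S₂)
    (hc1 : S₁.card = 2) (hc2 : S₂.card = 2)
    (hn1 : ConnectedIn S₁) (hn2 : ConnectedIn S₂)
    (ne1 : S₁ ≠ A) (ne2 : S₁ ≠ B) (ne3 : S₂ ≠ A) (ne4 : S₂ ≠ B) :
    ∃ T' : Tiling m n 2,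
      T'.tiles = (T.tiles \ {A, B}) ∪ {S₁, S₂} ∧ MetaAdj T T' := by
  have hS1ne : S₁.Nonempty := Finset.card_pos.mp (by omega)
  have hS2ne : S₂.Nonempty := Finset.card_pos.mp (by omega)
  have hS12 : S₁ ≠ S₂ := by
    rintro rfl
    rw [disjoint_self] at hd
    rw [hd] at hc1; simp at hc1
  have hsub1 : S₁ ⊆ A ∪ B := hu ▸ Finset.subset_union_left
  have hsub2 : S₂ ⊆ A ∪ B := hu ▸ Finset.subset_union_right
  have hABgrid : A ∪ B ⊆ gridCells m n := Finset.union_subset (T.subset A hA) (T.subset B hB)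
  -- S₁, S₂ are not tiles of T
  have hnotin : ∀ S : Finset (ℕ × ℕ), S.Nonempty → S ⊆ A ∪ B → S ≠ A → S ≠ B → S ∉ T.tiles := by
    intro S hne hsub hna hnb hmem
    obtain ⟨p, hp⟩ := hne
    rcases Finset.mem_union.mp (hsub hp) with h | h
    · exact hna (tile_eq T hmem hA hp h)
    · exact hnb (tile_eq T hmem hB hp h)
  have hS1notin := hnotin S₁ hS1ne hsub1 ne1 ne2
  have hS2notin := hnotin S₂ hS2ne hsub2 ne3 ne4
  set NT : Finset (Finset (ℕ × ℕ)) := (T.tiles \ {A, B}) ∪ {S₁, S₂} with hNT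
  have hmemNT : ∀ W : Finset (ℕ × ℕ),
      W ∈ NT ↔ (W ∈ T.tiles ∧ W ≠ A ∧ W ≠ B) ∨ W = S₁ ∨ W = S₂ := by
    intro W
    simp only [hNT, Finset.mem_union, Finset.mem_sdiff, Finset.mem_insert,
      Finset.mem_singleton]
    tauto
  refine ⟨⟨NT, ?_, ?_, ?_, ?_⟩, rfl, ?_, ?_⟩
  · -- covers
    intro c hc
    obtain ⟨W, ⟨hW, hcW⟩, hun⟩ := T.covers c hc
    by_cases hWAB : W = A ∨ W = B
    · have hcAB : c ∈ A ∪ B := by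
        rcases hWAB with rfl | rfl
        · exact Finset.mem_union_left _ hcW
        · exact Finset.mem_union_right _ hcW
      have hcS : c ∈ S₁ ∪ S₂ := hu ▸ hcAB
      have key : ∀ Y : Finset (ℕ × ℕ), Y ∈ T.tiles → c ∈ Y → Y = A ∨ Y = B := by
        intro Y hY hcY
        have := hun Y ⟨hY, hcY⟩
        rcases hWAB with rfl | rfl
        · exact Or.inl this
        · exact Or.inr this
      rcases Finset.mem_union.mp hcS with h1 | h1
      · refine ⟨S₁, ⟨(hmemNT S₁).mpr (Or.inr (Or.inl rfl)), h1⟩, ?_⟩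
        rintro Y ⟨hY, hcY⟩
        rcases (hmemNT Y).mp hY with ⟨hYt, hYa, hYb⟩ | rfl | rfl
        · rcases key Y hYt hcY with rfl | rfl
          · exact absurd rfl hYa
          · exact absurd rfl hYb
        · rfl
        · exact absurd h1 (Finset.disjoint_right.mp hd hcY)
      · refine ⟨S₂, ⟨(hmemNT S₂).mpr (Or.inr (Or.inr rfl)), h1⟩, ?_⟩
        rintro Y ⟨hY, hcY⟩
        rcases (hmemNT Y).mp hY with ⟨hYt, hYa, hYb⟩ | rfl | rfl
        · rcases key Y hYt hcY with rfl | rfl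
          · exact absurd rfl hYa
          · exact absurd rfl hYb
        · exact absurd h1 (Finset.disjoint_left.mp hd hcY)
        · rfl
    · push_neg at hWAB
      have hcnotAB : c ∉ A ∪ B := by
        intro hmem
        rcases Finset.mem_union.mp hmem with h | h
        · exact hWAB.1 (hun A ⟨hA, h⟩ ▸ rfl)
        · exact hWAB.2 (hun B ⟨hB, h⟩ ▸ rfl)
      refine ⟨W, ⟨(hmemNT W).mpr (Or.inl ⟨hW, hWAB.1, hWAB.2⟩), hcW⟩, ?_⟩
      rintro Y ⟨hY, hcY⟩
      rcases (hmemNT Y).mp hY with ⟨hYt, -, -⟩ | rfl | rfl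
      · exact hun Y ⟨hYt, hcY⟩
      · exact absurd (hu ▸ Finset.mem_union_left _ hcY) hcnotAB
      · exact absurd (hu ▸ Finset.mem_union_right _ hcY) hcnotAB
  · -- subset
    intro W hW
    rcases (hmemNT W).mp hW with ⟨hWt, -, -⟩ | rfl | rfl
    · exact T.subset W hWt
    · exact hsub1.trans hABgrid
    · exact hsub2.trans hABgrid
  · -- cards
    intro W hW
    rcases (hmemNT W).mp hW with ⟨hWt, -, -⟩ | rfl | rfl
    · exact T.card_tile W hWt
    · exact hc1
    · exact hc2
  · -- conn
    intro W hW
    rcases (hmemNT W).mp hW with ⟨hWt, -, -⟩ | rfl | rfl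
    · exact T.conn W hWt
    · exact hn1
    · exact hn2
  · -- diff 1
    have h1 : T.tiles \ NT = {A, B} := by
      ext W
      simp only [Finset.mem_sdiff, hmemNT, Finset.mem_insert, Finset.mem_singleton]
      constructor
      · rintro ⟨hW, hnot⟩
        by_contra hc
        push_neg at hc
        exact hnot (Or.inl ⟨hW, hc.1, hc.2⟩)
      · rintro (rfl | rfl)
        · exact ⟨hA, by push_neg; exact ⟨fun _ h => absurd rfl h, Ne.symm ne1, Ne.symm ne3⟩⟩
        · exact ⟨hB, by push_neg; exact ⟨fun _ _ => rfl, Ne.symm ne2, Ne.symm ne4⟩⟩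
    rw [h1]
    exact Finset.card_pair hAB
  · -- diff 2
    have h2 : NT \ T.tiles = {S₁, S₂} := by
      ext W
      simp only [Finset.mem_sdiff, hmemNT, Finset.mem_insert, Finset.mem_singleton]
      constructor
      · rintro ⟨hW, hnot⟩
        rcases hW with ⟨hWt, -, -⟩ | rfl | rfl
        · exact absurd hWt hnot
        · exact Or.inl rfl
        · exact Or.inr rfl
      · rintro (rfl | rfl)
        · exact ⟨Or.inr (Or.inl rfl), hS1notin⟩
        · exact ⟨Or.inr (Or.inr rfl), hS2notin⟩
    rw [h2]
    exact Finset.card_pair hS12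


lemma union_sq (r c : ℕ) : Hd r c ∪ Hd (r+1) c = Vd r c ∪ Vd r (c+1) := by
  ext ⟨a, b⟩
  simp [Hd, Vd, Prod.ext_iff]
  omega

lemma disj_HH (r c : ℕ) : Disjoint (Hd r c) (Hd (r+1) c) := by
  rw [Finset.disjoint_left]
  rintro ⟨a, b⟩ h1 h2
  simp [Hd, Prod.ext_iff] at h1 h2
  omega

lemma disj_VV (r c : ℕ) : Disjoint (Vd r c) (Vd r (c+1)) := by
  rw [Finset.disjoint_left]
  rintro ⟨a, b⟩ h1 h2
  simp [Vd, Prod.ext_iff] at h1 h2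
  omega

/-- Flip two adjacent vertical dominoes into two horizontal ones. -/
lemma flipVV {m n r c : ℕ} (T : Tiling m n 2) (h1 : Vd r c ∈ T.tiles)
    (h2 : Vd r (c+1) ∈ T.tiles) :
    ∃ T' : Tiling m n 2,
      T'.tiles = (T.tiles \ {Vd r c, Vd r (c+1)}) ∪ {Hd r c, Hd (r+1) c} ∧ MetaAdj T T' :=
  flip T h1 h2 (Vd_ne_Vd (by omega)) (union_sq r c) (disj_HH r c)
    (card_Hd _ _) (card_Hd _ _) (conn_Hd _ _) (conn_Hd _ _)
    (Hd_ne_Vd _ _ _ _) (Hd_ne_Vd _ _ _ _) (Hd_ne_Vd _ _ _ _) (Hd_ne_Vd _ _ _ _)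

/-- Flip two stacked horizontal dominoes into two vertical ones. -/
lemma flipHH {m n r c : ℕ} (T : Tiling m n 2) (h1 : Hd r c ∈ T.tiles)
    (h2 : Hd (r+1) c ∈ T.tiles) :
    ∃ T' : Tiling m n 2,
      T'.tiles = (T.tiles \ {Hd r c, Hd (r+1) c}) ∪ {Vd r c, Vd r (c+1)} ∧ MetaAdj T T' :=
  flip T h1 h2 (Hd_ne_Hd (by omega)) (union_sq r c).symm (disj_VV r c)
    (card_Vd _ _) (card_Vd _ _) (conn_Vd _ _) (conn_Vd _ _)
    (Vd_ne_Hd _ _ _ _) (Vd_ne_Hd _ _ _ _) (Vd_ne_Hd _ _ _ _) (Vd_ne_Hd _ _ _ _)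

/-- The staircase lemma: a vertical domino at (r,c) whose right neighbour cell's tile
does not stick out upwards can be flipped (after finitely many moves, all inside the
lower-right quadrant) so that the horizontal domino Hd r c appears. -/
lemma stair {m n : ℕ} : ∀ k, ∀ r c : ℕ, ∀ T : Tiling m n 2, n - c ≤ k →
    Vd r c ∈ T.tiles → c + 1 < n →
    (∀ W ∈ T.tiles, (r, c + 1) ∈ W → ∀ i, i + 1 = r → (i, c + 1) ∉ W) →
    ∃ T' : Tiling m n 2, Relation.ReflTransGen MetaAdj T T' ∧ Hd r c ∈ T'.tiles ∧
      (∀ W ∈ T.tiles, ¬ Quad r c W → W ∈ T'.tiles) ∧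
      (∀ W ∈ T'.tiles, W ∉ T.tiles → Quad r c W) := by
  intro k
  induction k with
  | zero => intro r c T hk hV hc hup; exfalso; omega
  | succ k ih =>
    intro r c T hk hV hc hup
    have hrm : r + 1 < m := (mem_grid.mp (T.subset _ hV (by simp [Vd] : (r+1, c) ∈ Vd r c))).1
    obtain ⟨W, ⟨hW, hWc⟩, -⟩ := T.covers (r, c+1) (mem_grid.mpr ⟨by omega, hc⟩)
    obtain ⟨q, hadj, hWeq⟩ := partner T hW hWc
    have hWshape : W = Hd r (c+1) ∨ W = Vd r (c+1) := by
      obtain ⟨a, b⟩ := q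
      rcases adj_cases hadj with ⟨ha, hb⟩ | ⟨ha, hb⟩ | ⟨ha, hb⟩ | ⟨ha, hb⟩
      · left; rw [hWeq, ha, hb]; rfl
      · exfalso
        have hWV : W = Vd r c := tile_eq T hW hV (p := (a, b)) (by simp [hWeq])
          (by simp only [Vd, Finset.mem_insert, Finset.mem_singleton, Prod.ext_iff]; omega)
        rw [hWV] at hWc
        simp only [Vd, Finset.mem_insert, Finset.mem_singleton, Prod.ext_iff] at hWc
        omega
      · right; rw [hWeq, ha, hb]; rfl
      · exfalso
        refine hup W hW hWc a ha ?_
        rw [hWeq]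
        simp only [Finset.mem_insert, Finset.mem_singleton, Prod.ext_iff]
        exact Or.inr ⟨trivial, hb.symm⟩
    rcases hWshape with hWH | hWV
    · -- W = Hd r (c+1)
      have hH1 : Hd r (c+1) ∈ T.tiles := hWH ▸ hW
      obtain ⟨X, ⟨hX, hXc⟩, -⟩ := T.covers (r+1, c+1) (mem_grid.mpr ⟨hrm, hc⟩)
      obtain ⟨q', hadj', hXeq⟩ := partner T hX hXc
      have hXshape : X = Hd (r+1) (c+1) ∨ X = Vd (r+1) (c+1) := by
        obtain ⟨a, b⟩ := q'
        rcases adj_cases hadj' with ⟨ha, hb⟩ | ⟨ha, hb⟩ | ⟨ha, hb⟩ | ⟨ha, hb⟩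
        · left; rw [hXeq, ha, hb]; rfl
        · exfalso
          have hXV : X = Vd r c := tile_eq T hX hV (p := (a, b)) (by simp [hXeq])
            (by simp only [Vd, Finset.mem_insert, Finset.mem_singleton, Prod.ext_iff]; omega)
          rw [hXV] at hXc
          simp only [Vd, Finset.mem_insert, Finset.mem_singleton, Prod.ext_iff] at hXc
          omega
        · right; rw [hXeq, ha, hb]; rfl
        · exfalso
          have hXH : X = Hd r (c+1) := tile_eq T hX hH1 (p := (a, b)) (by simp [hXeq])
            (by simp only [Hd, Finset.mem_insert, Finset.mem_singleton, Prod.ext_iff]; omega)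
          rw [hXH] at hXc
          simp only [Hd, Finset.mem_insert, Finset.mem_singleton, Prod.ext_iff] at hXc
          omega
      rcases hXshape with hXH | hXV
      · -- two stacked horizontals to the right : flip them, then flip the two verticals
        have hH2 : Hd (r+1) (c+1) ∈ T.tiles := hXH ▸ hX
        obtain ⟨Ta, hTat, hMA1⟩ := flipHH T hH1 hH2
        have hVa : Vd r c ∈ Ta.tiles := by
          rw [hTat]
          apply Finset.mem_union_left
          rw [Finset.mem_sdiff]
          refine ⟨hV, ?_⟩
          simp only [Finset.mem_insert, Finset.mem_singleton]
          push_neg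
          exact ⟨Vd_ne_Hd _ _ _ _, Vd_ne_Hd _ _ _ _⟩
        have hV1a : Vd r (c+1) ∈ Ta.tiles := by
          rw [hTat]; exact Finset.mem_union_right _ (by simp)
        obtain ⟨Tb, hTbt, hMA2⟩ := flipVV Ta hVa hV1a
        refine ⟨Tb, (Relation.ReflTransGen.single hMA1).tail hMA2, ?_, ?_, ?_⟩
        · rw [hTbt]; exact Finset.mem_union_right _ (by simp)
        · intro U hU hq
          have hUa : U ∈ Ta.tiles := by
            rw [hTat]; apply Finset.mem_union_left; rw [Finset.mem_sdiff]
            refine ⟨hU, ?_⟩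
            simp only [Finset.mem_insert, Finset.mem_singleton]
            rintro (rfl | rfl)
            · exact hq (quad_Hd le_rfl (by omega))
            · exact hq (quad_Hd (by omega) (by omega))
          rw [hTbt]; apply Finset.mem_union_left; rw [Finset.mem_sdiff]
          refine ⟨hUa, ?_⟩
          simp only [Finset.mem_insert, Finset.mem_singleton]
          rintro (rfl | rfl)
          · exact hq (quad_Vd le_rfl le_rfl)
          · exact hq (quad_Vd le_rfl (by omega))
        · intro U hU hnotin
          rw [hTbt] at hU
          rcases Finset.mem_union.mp hU with h | h
          · have hUa := (Finset.mem_sdiff.mp h).1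
            rw [hTat] at hUa
            rcases Finset.mem_union.mp hUa with h' | h'
            · exact absurd (Finset.mem_sdiff.mp h').1 hnotin
            · rcases Finset.mem_insert.mp h' with rfl | h'
              · exact quad_Vd le_rfl (by omega)
              · rw [Finset.mem_singleton.mp h']; exact quad_Vd le_rfl (by omega)
          · rcases Finset.mem_insert.mp h with rfl | h
            · exact quad_Hd le_rfl le_rfl
            · rw [Finset.mem_singleton.mp h]; exact quad_Hd (by omega) le_rfl
      · -- vertical below-right : recurse
        have hV2 : Vd (r+1) (c+1) ∈ T.tiles := hXV ▸ hX
        have hc2n : c + 2 < n :=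
          (mem_grid.mp (T.subset _ hH1 (by simp [Hd] : (r, c+1+1) ∈ Hd r (c+1)))).2
        have hup' : ∀ W' ∈ T.tiles, (r+1, c+1+1) ∈ W' → ∀ i, i + 1 = r + 1 →
            (i, c+1+1) ∉ W' := by
          intro W' hW' hmem i hi hiW'
          have hWH' : W' = Hd r (c+1) := tile_eq T hW' hH1 (p := (i, c+1+1)) hiW'
            (by simp only [Hd, Finset.mem_insert, Finset.mem_singleton, Prod.ext_iff]
                exact Or.inr ⟨by omega, trivial⟩)
          rw [hWH'] at hmem
          simp only [Hd, Finset.mem_insert, Finset.mem_singleton, Prod.ext_iff] at hmem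
          omega
        obtain ⟨Ta, hrel, hHa, hpres, hnew⟩ := ih (r+1) (c+1) T (by omega) hV2 (by omega) hup'
        have hVa : Vd r c ∈ Ta.tiles := hpres _ hV (not_quad_Vd (Or.inl (by omega)))
        have hH1a : Hd r (c+1) ∈ Ta.tiles := hpres _ hH1 (not_quad_Hd (Or.inl (by omega)))
        obtain ⟨Tb, hTbt, hMA1⟩ := flipHH Ta hH1a hHa
        have hVb : Vd r c ∈ Tb.tiles := by
          rw [hTbt]; apply Finset.mem_union_left; rw [Finset.mem_sdiff]
          refine ⟨hVa, ?_⟩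
          simp only [Finset.mem_insert, Finset.mem_singleton]
          push_neg
          exact ⟨Vd_ne_Hd _ _ _ _, Vd_ne_Hd _ _ _ _⟩
        have hV1b : Vd r (c+1) ∈ Tb.tiles := by
          rw [hTbt]; exact Finset.mem_union_right _ (by simp)
        obtain ⟨Tc, hTct, hMA2⟩ := flipVV Tb hVb hV1b
        refine ⟨Tc, (hrel.tail hMA1).tail hMA2, ?_, ?_, ?_⟩
        · rw [hTct]; exact Finset.mem_union_right _ (by simp)
        · intro U hU hq
          have hUa : U ∈ Ta.tiles :=
            hpres _ hU (fun hq' => hq (quad_anti (by omega) (by omega) hq'))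
          have hUb : U ∈ Tb.tiles := by
            rw [hTbt]; apply Finset.mem_union_left; rw [Finset.mem_sdiff]
            refine ⟨hUa, ?_⟩
            simp only [Finset.mem_insert, Finset.mem_singleton]
            rintro (rfl | rfl)
            · exact hq (quad_Hd le_rfl (by omega))
            · exact hq (quad_Hd (by omega) (by omega))
          rw [hTct]; apply Finset.mem_union_left; rw [Finset.mem_sdiff]
          refine ⟨hUb, ?_⟩
          simp only [Finset.mem_insert, Finset.mem_singleton]
          rintro (rfl | rfl)
          · exact hq (quad_Vd le_rfl le_rfl)
          · exact hq (quad_Vd le_rfl (by omega))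
        · intro U hU hnotin
          rw [hTct] at hU
          rcases Finset.mem_union.mp hU with h | h
          · have hUb := (Finset.mem_sdiff.mp h).1
            rw [hTbt] at hUb
            rcases Finset.mem_union.mp hUb with h' | h'
            · have hUa := (Finset.mem_sdiff.mp h').1
              by_cases hUT : U ∈ T.tiles
              · exact absurd hUT hnotin
              · exact quad_anti (by omega) (by omega) (hnew _ hUa hUT)
            · rcases Finset.mem_insert.mp h' with rfl | h'
              · exact quad_Vd le_rfl (by omega)
              · rw [Finset.mem_singleton.mp h']; exact quad_Vd le_rfl (by omega)
          · rcases Finset.mem_insert.mp h with rfl | h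
            · exact quad_Hd le_rfl le_rfl
            · rw [Finset.mem_singleton.mp h]; exact quad_Hd (by omega) le_rfl
    · -- W = Vd r (c+1): single flip
      have hV2 : Vd r (c+1) ∈ T.tiles := hWV ▸ hW
      obtain ⟨T', hT't, hMA⟩ := flipVV T hV hV2
      refine ⟨T', .single hMA, ?_, ?_, ?_⟩
      · rw [hT't]; exact Finset.mem_union_right _ (by simp)
      · intro U hU hq
        rw [hT't]; apply Finset.mem_union_left; rw [Finset.mem_sdiff]
        refine ⟨hU, ?_⟩
        simp only [Finset.mem_insert, Finset.mem_singleton]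
        rintro (rfl | rfl)
        · exact hq (quad_Vd le_rfl le_rfl)
        · exact hq (quad_Vd le_rfl (by omega))
      · intro U hU hnotin
        rw [hT't] at hU
        rcases Finset.mem_union.mp hU with h | h
        · exact absurd (Finset.mem_sdiff.mp h).1 hnotin
        · rcases Finset.mem_insert.mp h with rfl | h
          · exact quad_Hd le_rfl le_rfl
          · rw [Finset.mem_singleton.mp h]; exact quad_Hd (by omega) le_rfl


lemma metaAdj_symm {m n t : ℕ} : Symmetric (MetaAdj (m := m) (n := n) (t := t)) :=
  fun _ _ h => ⟨h.2, h.1⟩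

lemma rtg_symm {m n t : ℕ} {T₁ T₂ : Tiling m n t}
    (h : Relation.ReflTransGen MetaAdj T₁ T₂) : Relation.ReflTransGen MetaAdj T₂ T₁ :=
  haveI : Std.Symm (MetaAdj (m := m) (n := n) (t := t)) := ⟨fun _ _ h => metaAdj_symm h⟩
  Std.Symm.symm _ _ h

lemma key_lt_total {m n a b : ℕ} (ha : a < m) (hb : b < n) : a * n + b < m * n := by
  have h1 : (a + 1) * n ≤ m * n := Nat.mul_le_mul_right n (by omega)
  have h2 : (a + 1) * n = a * n + n := by ring
  omega

lemma keylex {n r c r' c' : ℕ} (hc : c < n) (hc' : c' < n)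
    (h : r' * n + c' < r * n + c) : r' < r ∨ (r' = r ∧ c' < c) := by
  rcases lt_trichotomy r' r with h1 | rfl | h1
  · exact Or.inl h1
  · exact Or.inr ⟨rfl, by omega⟩
  · exfalso
    have h2 : (r + 1) * n ≤ r' * n := Nat.mul_le_mul_right n (by omega)
    have h3 : (r + 1) * n = r * n + n := by ring
    omega

lemma key_inj {n r c r' c' : ℕ} (hc : c < n) (hc' : c' < n)
    (h : r' * n + c' = r * n + c) : r' = r ∧ c' = c := by
  rcases lt_trichotomy r' r with h1 | rfl | h1
  · exfalso
    have h2 : (r' + 1) * n ≤ r * n := Nat.mul_le_mul_right n (by omega)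
    have h3 : (r' + 1) * n = r' * n + n := by ring
    omega
  · exact ⟨rfl, by omega⟩
  · exfalso
    have h2 : (r + 1) * n ≤ r' * n := Nat.mul_le_mul_right n (by omega)
    have h3 : (r + 1) * n = r * n + n := by ring
    omega

/-- The main step: at the first disagreement cell (r,c), T₁ has the horizontal and
T₂ the vertical domino.  Straighten T₂ there and recurse. -/
lemma outer_step {m n : ℕ} {j r c : ℕ} (T₁ T₂ : Tiling m n 2)
    (ih : ∀ T₁' T₂' : Tiling m n 2,
      (∀ p : ℕ × ℕ, p ∈ gridCells m n → p.1 * n + p.2 + j < m * n →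
        ∀ W₁ ∈ T₁'.tiles, ∀ W₂ ∈ T₂'.tiles, p ∈ W₁ → p ∈ W₂ → W₁ = W₂) →
      Relation.ReflTransGen MetaAdj T₁' T₂')
    (hagr : ∀ p : ℕ × ℕ, p ∈ gridCells m n → p.1 * n + p.2 + j + 1 < m * n →
      ∀ W₁ ∈ T₁.tiles, ∀ W₂ ∈ T₂.tiles, p ∈ W₁ → p ∈ W₂ → W₁ = W₂)
    (hkey : r * n + c + j + 1 = m * n) (hrc : (r, c) ∈ gridCells m n)
    (hH : Hd r c ∈ T₁.tiles) (hV : Vd r c ∈ T₂.tiles) :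
    Relation.ReflTransGen MetaAdj T₁ T₂ := by
  have hrm : r < m := (mem_grid.mp hrc).1
  have hcn : c < n := (mem_grid.mp hrc).2
  have hc1 : c + 1 < n :=
    (mem_grid.mp (T₁.subset _ hH (by simp [Hd] : (r, c + 1) ∈ Hd r c))).2
  -- the up-exclusion hypothesis for the staircase
  have hup : ∀ W ∈ T₂.tiles, (r, c + 1) ∈ W → ∀ i, i + 1 = r → (i, c + 1) ∉ W := by
    intro W hW hmem i hi hiW
    have higrid : (i, c + 1) ∈ gridCells m n := mem_grid.mpr ⟨by omega, hc1⟩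
    have hikey : i * n + (c + 1) + j + 1 < m * n := by
      have : (i + 1) * n = i * n + n := by ring
      have h2 : (i + 1) * n = r * n := by rw [hi]
      omega
    obtain ⟨U, ⟨hU, hUc⟩, -⟩ := T₁.covers (i, c + 1) higrid
    have hUW : U = W := hagr (i, c + 1) higrid hikey U hU W hW hUc hiW
    have hUH : U = Hd r c := tile_eq T₁ hU hH (hUW ▸ hmem) (by simp [Hd])
    rw [hUH] at hUW
    rw [← hUW] at hiW
    simp only [Hd, Finset.mem_insert, Finset.mem_singleton, Prod.ext_iff] at hiW
    omega
  obtain ⟨T₂', hrel, hHd', hpres, -⟩ := stair n r c T₂ (Nat.sub_le n c) hV hc1 hup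
  have hagr' : ∀ p : ℕ × ℕ, p ∈ gridCells m n → p.1 * n + p.2 + j < m * n →
      ∀ W₁ ∈ T₁.tiles, ∀ W₂ ∈ T₂'.tiles, p ∈ W₁ → p ∈ W₂ → W₁ = W₂ := by
    rintro ⟨a, b⟩ hp hk W₁ hW₁ W₂' hW₂' hq1 hq2
    have hbn : b < n := (mem_grid.mp hp).2
    rcases Nat.lt_or_ge (a * n + b) (r * n + c) with hlt | hge
    · -- strictly earlier cell
      have hlex := keylex hcn hbn hlt
      obtain ⟨U, ⟨hU, hUc⟩, -⟩ := T₂.covers (a, b) hp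
      have hnq : ¬ Quad r c U := by
        intro hQ
        have := hQ (a, b) hUc
        simp at this
        omega
      have hUpres : U ∈ T₂'.tiles := hpres U hU hnq
      have hW2U : W₂' = U := tile_eq T₂' hW₂' hUpres hq2 hUc
      have : W₁ = U := hagr (a, b) hp (by dsimp; omega) W₁ hW₁ U hU hq1 hUc
      rw [hW2U, this]
    · -- the cell (r,c) itself
      have hab : a = r ∧ b = c := by
        have : a * n + b = r * n + c := by dsimp at hk; omega
        exact key_inj hcn hbn this
      obtain ⟨rfl, rfl⟩ := hab
      have h1 : W₁ = Hd a b := tile_eq T₁ hW₁ hH hq1 (by simp [Hd])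
      have h2 : W₂' = Hd a b := tile_eq T₂' hW₂' hHd' hq2 (by simp [Hd])
      rw [h1, h2]
  exact (ih T₁ T₂' hagr').trans (rtg_symm hrel)

/-- Both tiles at a first-disagreement cell are the horizontal or vertical domino there. -/
lemma shape_aux {m n : ℕ} {j r c : ℕ} (T T' : Tiling m n 2)
    (hagr : ∀ p : ℕ × ℕ, p ∈ gridCells m n → p.1 * n + p.2 + j + 1 < m * n →
      ∀ W₁ ∈ T.tiles, ∀ W₂ ∈ T'.tiles, p ∈ W₁ → p ∈ W₂ → W₁ = W₂)
    (hkey : r * n + c + j + 1 = m * n) (hrc : (r, c) ∈ gridCells m n)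
    {W W' : Finset (ℕ × ℕ)} (hW : W ∈ T.tiles) (hW' : W' ∈ T'.tiles)
    (hpW : (r, c) ∈ W) (hpW' : (r, c) ∈ W') (hne : W ≠ W') :
    W = Hd r c ∨ W = Vd r c := by
  have hrm : r < m := (mem_grid.mp hrc).1
  have hcn : c < n := (mem_grid.mp hrc).2
  obtain ⟨q, hadj, hWeq⟩ := partner T hW hpW
  obtain ⟨a, b⟩ := q
  have earlier : ∀ a' b' : ℕ, a' < m → b' < n → a' * n + b' + j + 1 < m * n →
      (a', b') ∈ W → False := by
    intro a' b' ham hbn hk hmemW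
    have hp : (a', b') ∈ gridCells m n := mem_grid.mpr ⟨ham, hbn⟩
    obtain ⟨U, ⟨hU, hUc⟩, -⟩ := T'.covers (a', b') hp
    have : W = U := hagr (a', b') hp hk W hW U hU hmemW hUc
    rw [this] at hpW
    exact hne (this.trans (tile_eq T' hU hW' hpW hpW'))
  rcases adj_cases hadj with ⟨ha, hb⟩ | ⟨ha, hb⟩ | ⟨ha, hb⟩ | ⟨ha, hb⟩
  · left; rw [hWeq, ha, hb]; rfl
  · -- left neighbour (r, c-1): an earlier cell
    exfalso
    subst ha
    exact earlier a b (by omega) (by omega) (by omega) (by simp [hWeq])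
  · right; rw [hWeq, ha, hb]; rfl
  · -- upper neighbour (r-1, c): an earlier cell
    exfalso
    refine earlier a b (by omega) (by omega) ?_ (by simp [hWeq])
    have h2 : (a + 1) * n = a * n + n := by ring
    have h3 : (a + 1) * n = r * n := by rw [ha]
    omega

lemma outer {m n : ℕ} : ∀ j : ℕ, ∀ T₁ T₂ : Tiling m n 2,
    (∀ p : ℕ × ℕ, p ∈ gridCells m n → p.1 * n + p.2 + j < m * n →
      ∀ W₁ ∈ T₁.tiles, ∀ W₂ ∈ T₂.tiles, p ∈ W₁ → p ∈ W₂ → W₁ = W₂) →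
    Relation.ReflTransGen MetaAdj T₁ T₂ := by
  intro j
  induction j with
  | zero =>
    intro T₁ T₂ hagr
    have : T₁ = T₂ := by
      apply tiling_ext
      ext W
      constructor
      · intro hW
        have hne : W.Nonempty := Finset.card_pos.mp (by rw [T₁.card_tile W hW]; omega)
        obtain ⟨p, hp⟩ := hne
        have hgrid : p ∈ gridCells m n := T₁.subset W hW hp
        obtain ⟨U, ⟨hU, hUc⟩, -⟩ := T₂.covers p hgrid
        have : W = U := hagr p hgrid
          (by have := mem_grid.mp hgrid; have := key_lt_total this.1 this.2; omega)
          W hW U hU hp hUc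
        rw [this]; exact hU
      · intro hW
        have hne : W.Nonempty := Finset.card_pos.mp (by rw [T₂.card_tile W hW]; omega)
        obtain ⟨p, hp⟩ := hne
        have hgrid : p ∈ gridCells m n := T₂.subset W hW hp
        obtain ⟨U, ⟨hU, hUc⟩, -⟩ := T₁.covers p hgrid
        have : U = W := hagr p hgrid
          (by have := mem_grid.mp hgrid; have := key_lt_total this.1 this.2; omega)
          U hU W hW hUc hp
        rw [← this]; exact hU
    rw [this]
  | succ j ih =>
    intro T₁ T₂ hagr
    by_cases hfr : ∀ p : ℕ × ℕ, p ∈ gridCells m n → p.1 * n + p.2 + j + 1 = m * n →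
        ∀ W₁ ∈ T₁.tiles, ∀ W₂ ∈ T₂.tiles, p ∈ W₁ → p ∈ W₂ → W₁ = W₂
    · apply ih
      intro p hp hk W₁ h1 W₂ h2 hp1 hp2
      rcases Nat.lt_or_ge (p.1 * n + p.2 + j + 1) (m * n) with h | h
      · exact hagr p hp (by omega) W₁ h1 W₂ h2 hp1 hp2
      · exact hfr p hp (by omega) W₁ h1 W₂ h2 hp1 hp2
    · push_neg at hfr
      obtain ⟨p, hp, hkey, W₁, hW₁, W₂, hW₂, hpW₁, hpW₂, hne⟩ := hfr
      obtain ⟨r, c⟩ := p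
      have hagr' : ∀ p : ℕ × ℕ, p ∈ gridCells m n → p.1 * n + p.2 + j + 1 < m * n →
          ∀ W₁ ∈ T₁.tiles, ∀ W₂ ∈ T₂.tiles, p ∈ W₁ → p ∈ W₂ → W₁ = W₂ := by
        intro p hp hk
        exact hagr p hp (by omega)
      have hagr'' : ∀ p : ℕ × ℕ, p ∈ gridCells m n → p.1 * n + p.2 + j + 1 < m * n →
          ∀ W₂ ∈ T₂.tiles, ∀ W₁ ∈ T₁.tiles, p ∈ W₂ → p ∈ W₁ → W₂ = W₁ := by
        intro p hp hk W₂' h2 W₁' h1 hq2 hq1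
        exact (hagr' p hp hk W₁' h1 W₂' h2 hq1 hq2).symm
      have hs1 := shape_aux T₁ T₂ hagr' hkey hp hW₁ hW₂ hpW₁ hpW₂ hne
      have hs2 := shape_aux T₂ T₁ hagr'' hkey hp hW₂ hW₁ hpW₂ hpW₁ hne.symm
      rcases hs1 with h1 | h1 <;> rcases hs2 with h2 | h2
      · exact absurd (h1.trans h2.symm) hne
      · exact outer_step T₁ T₂ ih hagr' hkey hp (h1 ▸ hW₁) (h2 ▸ hW₂)
      · exact rtg_symm (outer_step T₂ T₁ ih hagr'' hkey hp (h2 ▸ hW₂) (h1 ▸ hW₁))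
      · exact absurd (h1.trans h2.symm) hne

end Stmt2Aux

/-- For any positive integers m and n, the metagraph of domino tilings of the m×n grid
under recombination moves is connected. -/
theorem stmt_2 (m n : ℕ) (hm : 0 < m) (hn : 0 < n) (T₁ T₂ : Tiling m n 2) :
    Relation.ReflTransGen (MetaAdj (m := m) (n := n) (t := 2)) T₁ T₂ :=
  Stmt2Aux.outer (m * n) T₁ T₂ (fun p _ hk => absurd hk (by omega))
end

section
/- For any positive integer n divisible by 3, the metagraph of 3-omino tilings of the 2×n grid under recombination moves is connected. -/
set_option linter.unreachableTactic false
set_option linter.unusedTactic false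
set_option maxHeartbeats 1000000

lemma adj_symm {p q : ℕ × ℕ} (h : Adj p q) : Adj q p := by
  obtain ⟨p1,p2⟩ := p; obtain ⟨q1,q2⟩ := q
  simp only [Adj] at h ⊢; omega

lemma adj_right (r c : ℕ) : Adj (r,c) (r,c+1) := Or.inl ⟨rfl, Or.inl rfl⟩

lemma adj_down (r c : ℕ) : Adj (r,c) (r+1,c) := Or.inr ⟨rfl, Or.inl rfl⟩

lemma conn3 {a b c : ℕ × ℕ} (hab : Adj a b) (hbc : Adj b c) :
    ConnectedIn {a, b, c} := by
  intro p hp q hq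
  set S : Finset (ℕ × ℕ) := {a,b,c} with hS
  have ha : a ∈ S := by simp [hS]
  have hb : b ∈ S := by simp [hS]
  have hc : c ∈ S := by simp [hS]
  set R := fun x y : ℕ × ℕ => x ∈ S ∧ y ∈ S ∧ Adj x y with hR
  have Rab : Relation.ReflTransGen R a b := Relation.ReflTransGen.single ⟨ha, hb, hab⟩
  have Rba : Relation.ReflTransGen R b a := Relation.ReflTransGen.single ⟨hb, ha, adj_symm hab⟩
  have Rbc : Relation.ReflTransGen R b c := Relation.ReflTransGen.single ⟨hb, hc, hbc⟩
  have Rcb : Relation.ReflTransGen R c b := Relation.ReflTransGen.single ⟨hc, hb, adj_symm hbc⟩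
  simp only [hS, Finset.mem_insert, Finset.mem_singleton] at hp hq
  rcases hp with rfl|rfl|rfl <;> rcases hq with rfl|rfl|rfl <;>
    first
      | exact Relation.ReflTransGen.refl
      | assumption
      | exact Rab.trans Rbc
      | exact Rcb.trans Rba

lemma shape3 {S : Finset (ℕ × ℕ)} (h3 : S.card = 3) (hcon : ConnectedIn S) {c : ℕ × ℕ}
    (hcS : c ∈ S) :
    ∃ a b, a ∈ S ∧ b ∈ S ∧ S = {c, a, b} ∧ a ≠ c ∧ b ≠ c ∧ a ≠ b ∧
      Adj c a ∧ (Adj a b ∨ Adj c b) := by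
  -- first, write S = {c, u, v}
  obtain ⟨x, y, z, hxy, hxz, hyz, rfl⟩ := Finset.card_eq_three.mp h3
  have hcuv : ∃ u v, u ≠ c ∧ v ≠ c ∧ u ≠ v ∧ ({x,y,z} : Finset (ℕ×ℕ)) = {c, u, v} := by
    simp only [Finset.mem_insert, Finset.mem_singleton] at hcS
    rcases hcS with rfl|rfl|rfl
    · exact ⟨y, z, fun h => hxy h.symm, fun h => hxz h.symm, hyz, rfl⟩
    · exact ⟨x, z, hxy, fun h => hyz h.symm, hxz, by ext w; simp; tauto⟩
    · exact ⟨x, y, hxz, hyz, hxy, by ext w; simp; tauto⟩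
  obtain ⟨u, v, huc, hvc, huv, hSeq⟩ := hcuv
  rw [hSeq] at hcon ⊢
  clear hSeq hcS
  set S : Finset (ℕ×ℕ) := {c,u,v} with hS
  have hcm : c ∈ S := by simp [hS]
  have hum : u ∈ S := by simp [hS]
  have hvm : v ∈ S := by simp [hS]
  have memS : ∀ w, w ∈ S → w = c ∨ w = u ∨ w = v := by
    intro w hw; simpa [hS] using hw
  -- first step from c
  have h1 : Adj c u ∨ Adj c v := by
    have hcu := hcon c hcm u hum
    rcases (Relation.ReflTransGen.cases_head hcu) with heq | ⟨d, ⟨_, hdS, hAdj⟩, _⟩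
    · exact absurd heq.symm huc
    · rcases memS d hdS with rfl|rfl|rfl
      · exact absurd hAdj (adj_irrefl _)
      · exact Or.inl hAdj
      · exact Or.inr hAdj
  have key : ∀ a b : ℕ × ℕ, a ∈ S → b ∈ S → a ≠ c → b ≠ c → a ≠ b → S = {c,a,b} →
      Adj c a → ∃ a' b', a' ∈ S ∧ b' ∈ S ∧ S = {c, a', b'} ∧ a' ≠ c ∧ b' ≠ c ∧ a' ≠ b' ∧
      Adj c a' ∧ (Adj a' b' ∨ Adj c b') := by
    intro a b haS hbS hac hbc hab hSab hca
    refine ⟨a, b, haS, hbS, hSab, hac, hbc, hab, hca, ?_⟩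
    by_cases hcb : Adj c b
    · exact Or.inr hcb
    · left
      have hcb' := hcon c hcm b hbS
      rcases (Relation.ReflTransGen.cases_tail hcb') with heq | ⟨d, _, ⟨hdS, _, hAdj⟩⟩
      · exact absurd heq hbc
      · have hd3 : d = c ∨ d = a ∨ d = b := by
          rw [hSab] at hdS; simpa using hdS
        rcases hd3 with rfl|rfl|rfl
        · exact absurd hAdj hcb
        · exact hAdj
        · exact absurd hAdj (adj_irrefl _)
  rcases h1 with hcu' | hcv'
  · exact key u v hum hvm huc hvc huv rfl hcu'
  · refine key v u hvm hum hvc huc (Ne.symm huv) ?_ hcv'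
    ext w; simp [hS]; tauto

lemma mem_grid_s3 {m n : ℕ} {p : ℕ × ℕ} : p ∈ gridCells m n ↔ p.1 < m ∧ p.2 < n := by
  simp [gridCells]

def rowI (r i : ℕ) : Finset (ℕ × ℕ) := {(r, 3*i), (r, 3*i+1), (r, 3*i+2)}

lemma mem_rowI {p : ℕ × ℕ} {r i : ℕ} :
    p ∈ rowI r i ↔ p.1 = r ∧ (p.2 = 3*i ∨ p.2 = 3*i+1 ∨ p.2 = 3*i+2) := by
  obtain ⟨a,b⟩ := p
  simp [rowI, Prod.ext_iff]
  tauto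

lemma card3 {a b c : ℕ × ℕ} (h1 : a ≠ b) (h2 : a ≠ c) (h3 : b ≠ c) :
    ({a,b,c} : Finset (ℕ × ℕ)).card = 3 :=
  Finset.card_eq_three.mpr ⟨a, b, c, h1, h2, h3, rfl⟩

lemma card_rowI (r i : ℕ) : (rowI r i).card = 3 := by
  apply card3 <;> simp [Prod.ext_iff]

lemma conn_rowI (r i : ℕ) : ConnectedIn (rowI r i) := by
  have h := conn3 (adj_right r (3*i)) (a := (r, 3*i)) (c := (r, 3*i+2)) ?_
  · exact h
  · have := adj_right r (3*i+1); convert this using 3 <;> omega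

def canonTiles (n : ℕ) : Finset (Finset (ℕ × ℕ)) :=
  (Finset.range 2 ×ˢ Finset.range (n/3)).image fun ri => rowI ri.1 ri.2

lemma mem_canonTiles {n : ℕ} {X : Finset (ℕ × ℕ)} :
    X ∈ canonTiles n ↔ ∃ r, r < 2 ∧ ∃ i, i < n/3 ∧ X = rowI r i := by
  simp [canonTiles, eq_comm]
  constructor
  · rintro ⟨r, i, ⟨hr, hi⟩, h⟩; exact ⟨r, hr, i, hi, h⟩
  · rintro ⟨r, hr, i, hi, h⟩; exact ⟨r, i, ⟨hr, hi⟩, h⟩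

def canon (n : ℕ) (h3 : 3 ∣ n) : Tiling 2 n 3 where
  tiles := canonTiles n
  covers := by
    rintro ⟨r, x⟩ hp
    rw [mem_grid_s3] at hp
    obtain ⟨hr, hx⟩ := hp
    have hdiv : 3 * (n / 3) = n := Nat.mul_div_cancel' h3
    refine ⟨rowI r (x/3), ⟨?_, ?_⟩, ?_⟩
    · exact mem_canonTiles.mpr ⟨r, hr, x/3, by omega, rfl⟩
    · rw [mem_rowI]; constructor; · rfl
      · simp only; omega
    · rintro Y ⟨hY, hxY⟩
      obtain ⟨r', hr', i', hi', rfl⟩ := mem_canonTiles.mp hY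
      rw [mem_rowI] at hxY
      simp only at hxY
      obtain ⟨rfl, h2⟩ := hxY
      congr 1
      omega
  subset := by
    intro Y hY
    obtain ⟨r, hr, i, hi, rfl⟩ := mem_canonTiles.mp hY
    intro p hp
    rw [mem_rowI] at hp
    rw [mem_grid_s3]
    have hdiv : 3 * (n / 3) = n := Nat.mul_div_cancel' h3
    omega
  card_tile := by
    intro Y hY
    obtain ⟨r, hr, i, hi, rfl⟩ := mem_canonTiles.mp hY
    exact card_rowI r i
  conn := by
    intro Y hY
    obtain ⟨r, hr, i, hi, rfl⟩ := mem_canonTiles.mp hY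
    exact conn_rowI r i

lemma tile_unique {m n t : ℕ} (T : Tiling m n t) {X Y : Finset (ℕ × ℕ)} {p : ℕ × ℕ}
    (hX : X ∈ T.tiles) (hY : Y ∈ T.tiles) (hpX : p ∈ X) (hpY : p ∈ Y) : X = Y := by
  have hp : p ∈ gridCells m n := T.subset X hX hpX
  obtain ⟨W, _, hU⟩ := T.covers p hp
  rw [hU X ⟨hX, hpX⟩, hU Y ⟨hY, hpY⟩]

lemma tiling_ext {m n t : ℕ} {A B : Tiling m n t} (h : A.tiles = B.tiles) : A = B := by
  cases A; cases B; simp only at h; subst h; rfl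

lemma make_move {m n t : ℕ} (ht : 0 < t) (T : Tiling m n t)
    (P Q S₁ S₂ : Finset (ℕ × ℕ))
    (hP : P ∈ T.tiles) (hQ : Q ∈ T.tiles) (hPQ : P ≠ Q)
    (h1 : S₁.card = t) (h2 : S₂.card = t)
    (hc1 : ConnectedIn S₁) (hc2 : ConnectedIn S₂)
    (hd : Disjoint S₁ S₂) (hu : S₁ ∪ S₂ = P ∪ Q)
    (hS1P : S₁ ≠ P) (hS1Q : S₁ ≠ Q) (hS2P : S₂ ≠ P) (hS2Q : S₂ ≠ Q) :
    ∃ T' : Tiling m n t, MetaAdj T T' ∧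
      T'.tiles = (T.tiles \ {P, Q}) ∪ {S₁, S₂} := by
  have hS1sub : S₁ ⊆ P ∪ Q := hu ▸ Finset.subset_union_left
  have hS2sub : S₂ ⊆ P ∪ Q := hu ▸ Finset.subset_union_right
  have hS1ne : S₁.Nonempty := Finset.card_pos.mp (h1 ▸ ht)
  have hS2ne : S₂.Nonempty := Finset.card_pos.mp (h2 ▸ ht)
  have hS12 : S₁ ≠ S₂ := by
    rintro rfl
    obtain ⟨p, hp⟩ := hS1ne
    exact Finset.disjoint_left.mp hd hp hp
  -- S₁, S₂ are not tiles of T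
  have hnotin : ∀ S : Finset (ℕ × ℕ), S ⊆ P ∪ Q → S.Nonempty → S ≠ P → S ≠ Q →
      S ∉ T.tiles := by
    intro S hsub hne hnP hnQ hmem
    obtain ⟨p, hp⟩ := hne
    rcases Finset.mem_union.mp (hsub hp) with hpP | hpQ
    · exact hnP (tile_unique T hmem hP hp hpP)
    · exact hnQ (tile_unique T hmem hQ hp hpQ)
  have hS1nt : S₁ ∉ T.tiles := hnotin S₁ hS1sub hS1ne hS1P hS1Q
  have hS2nt : S₂ ∉ T.tiles := hnotin S₂ hS2sub hS2ne hS2P hS2Q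
  set tiles' : Finset (Finset (ℕ × ℕ)) := (T.tiles \ {P, Q}) ∪ {S₁, S₂} with htiles'
  have hmem' : ∀ X, X ∈ tiles' ↔ (X ∈ T.tiles ∧ X ≠ P ∧ X ≠ Q) ∨ X = S₁ ∨ X = S₂ := by
    intro X
    simp [htiles', and_comm]
    tauto
  -- any tile of tiles' is old-or-new
  have key_unique : ∀ X Y, X ∈ tiles' → Y ∈ tiles' → ∀ p, p ∈ X → p ∈ Y → X = Y := by
    intro X Y hX hY p hpX hpY
    rcases (hmem' X).mp hX with ⟨hXt, hXP, hXQ⟩ | hXn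
    · rcases (hmem' Y).mp hY with ⟨hYt, _, _⟩ | hYn
      · exact tile_unique T hXt hYt hpX hpY
      · exfalso
        have hpPQ : p ∈ P ∪ Q := by
          rcases hYn with rfl | rfl
          · exact hS1sub hpY
          · exact hS2sub hpY
        rcases Finset.mem_union.mp hpPQ with h | h
        · exact hXP (tile_unique T hXt hP hpX h)
        · exact hXQ (tile_unique T hXt hQ hpX h)
    · rcases (hmem' Y).mp hY with ⟨hYt, hYP, hYQ⟩ | hYn
      · exfalso
        have hpPQ : p ∈ P ∪ Q := by
          rcases hXn with rfl | rfl
          · exact hS1sub hpX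
          · exact hS2sub hpX
        rcases Finset.mem_union.mp hpPQ with h | h
        · exact hYP (tile_unique T hYt hP hpY h)
        · exact hYQ (tile_unique T hYt hQ hpY h)
      · rcases hXn with rfl | rfl <;> rcases hYn with rfl | rfl
        · rfl
        · exact absurd hpY (Finset.disjoint_left.mp hd hpX)
        · exact absurd hpX (Finset.disjoint_left.mp hd hpY)
        · rfl
  have covers' : ∀ c ∈ gridCells m n, ∃! X, X ∈ tiles' ∧ c ∈ X := by
    intro c hc
    obtain ⟨W, ⟨hWt, hcW⟩, hWu⟩ := T.covers c hc
    have hex : ∃ X, X ∈ tiles' ∧ c ∈ X := by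
      by_cases hWPQ : W = P ∨ W = Q
      · have hcPQ : c ∈ P ∪ Q := by
          rcases hWPQ with rfl | rfl
          · exact Finset.mem_union_left _ hcW
          · exact Finset.mem_union_right _ hcW
        rw [← hu] at hcPQ
        rcases Finset.mem_union.mp hcPQ with h | h
        · exact ⟨S₁, (hmem' S₁).mpr (Or.inr (Or.inl rfl)), h⟩
        · exact ⟨S₂, (hmem' S₂).mpr (Or.inr (Or.inr rfl)), h⟩
      · push_neg at hWPQ
        exact ⟨W, (hmem' W).mpr (Or.inl ⟨hWt, hWPQ⟩), hcW⟩
    obtain ⟨X, hX⟩ := hex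
    exact ⟨X, hX, fun Y hY => key_unique Y X hY.1 hX.1 c hY.2 hX.2⟩
  have subset' : ∀ X ∈ tiles', X ⊆ gridCells m n := by
    intro X hX
    rcases (hmem' X).mp hX with ⟨hXt, _, _⟩ | hXn
    · exact T.subset X hXt
    · have hPQsub : P ∪ Q ⊆ gridCells m n :=
        Finset.union_subset (T.subset P hP) (T.subset Q hQ)
      rcases hXn with rfl | rfl
      · exact hS1sub.trans hPQsub
      · exact hS2sub.trans hPQsub
  have card' : ∀ X ∈ tiles', X.card = t := by
    intro X hX
    rcases (hmem' X).mp hX with ⟨hXt, _, _⟩ | (rfl | rfl)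
    · exact T.card_tile X hXt
    · exact h1
    · exact h2
  have conn' : ∀ X ∈ tiles', ConnectedIn X := by
    intro X hX
    rcases (hmem' X).mp hX with ⟨hXt, _, _⟩ | (rfl | rfl)
    · exact T.conn X hXt
    · exact hc1
    · exact hc2
  refine ⟨⟨tiles', covers', subset', card', conn'⟩, ⟨?_, ?_⟩, rfl⟩
  · have : T.tiles \ tiles' = {P, Q} := by
      ext X
      simp only [Finset.mem_sdiff, Finset.mem_insert, Finset.mem_singleton]
      constructor
      · rintro ⟨hXt, hX'⟩
        by_contra hcon
        push_neg at hcon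
        exact hX' ((hmem' X).mpr (Or.inl ⟨hXt, hcon⟩))
      · rintro (rfl | rfl)
        · refine ⟨hP, fun h => ?_⟩
          rcases (hmem' X).mp h with ⟨_, hne, _⟩ | (rfl | rfl)
          · exact hne rfl
          · exact hS1P rfl
          · exact hS2P rfl
        · refine ⟨hQ, fun h => ?_⟩
          rcases (hmem' X).mp h with ⟨_, _, hne⟩ | (rfl | rfl)
          · exact hne rfl
          · exact hS1Q rfl
          · exact hS2Q rfl
    rw [this]
    rw [Finset.card_insert_of_notMem (by simpa using hPQ), Finset.card_singleton]
  · have : tiles' \ T.tiles = {S₁, S₂} := by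
      ext X
      simp only [Finset.mem_sdiff, Finset.mem_insert, Finset.mem_singleton]
      constructor
      · rintro ⟨hX', hXt⟩
        rcases (hmem' X).mp hX' with ⟨h, _, _⟩ | (rfl | rfl)
        · exact absurd h hXt
        · exact Or.inl rfl
        · exact Or.inr rfl
      · rintro (rfl | rfl)
        · exact ⟨(hmem' X).mpr (Or.inr (Or.inl rfl)), hS1nt⟩
        · exact ⟨(hmem' X).mpr (Or.inr (Or.inr rfl)), hS2nt⟩
    rw [this]
    rw [Finset.card_insert_of_notMem (by simpa using hS12), Finset.card_singleton]

def BInv {n : ℕ} (k : ℕ) (T : Tiling 2 n 3) : Prop :=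
  ∀ i, i < k → rowI 0 i ∈ T.tiles ∧ rowI 1 i ∈ T.tiles

lemma tile_data {n : ℕ} (T : Tiling 2 n 3) {X : Finset (ℕ × ℕ)} (hX : X ∈ T.tiles)
    {c : ℕ × ℕ} (hc : c ∈ X) :
    ∃ a1 a2 b1 b2 : ℕ, X = {c, (a1,a2), (b1,b2)} ∧ (a1,a2) ≠ c ∧ (b1,b2) ≠ c ∧
      (a1,a2) ≠ (b1,b2) ∧ a1 < 2 ∧ b1 < 2 ∧ a2 < n ∧ b2 < n ∧
      Adj c (a1,a2) ∧ (Adj (a1,a2) (b1,b2) ∨ Adj c (b1,b2)) := by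
  obtain ⟨a, b, haS, hbS, hSeq, hac, hbc, hab, hAdj1, hAdj2⟩ :=
    shape3 (T.card_tile X hX) (T.conn X hX) hc
  have hag := mem_grid_s3.mp (T.subset X hX haS)
  have hbg := mem_grid_s3.mp (T.subset X hX hbS)
  exact ⟨a.1, a.2, b.1, b.2, by simpa using hSeq, by simpa using hac, by simpa using hbc,
    by simpa using hab, hag.1, hbg.1, hag.2, hbg.2, by simpa using hAdj1,
    by simpa using hAdj2⟩

lemma sealed {n k : ℕ} (T : Tiling 2 n 3) (hinv : BInv k T) {X : Finset (ℕ × ℕ)}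
    (hX : X ∈ T.tiles) {q : ℕ × ℕ} (hq : q ∈ X) (hqc : 3*k ≤ q.2) :
    ∀ p ∈ X, 3*k ≤ p.2 := by
  rintro ⟨p1, p2⟩ hp
  by_contra h
  push_neg at h
  have hp1 : p1 < 2 := (mem_grid_s3.mp (T.subset X hX hp)).1
  have hik : p2/3 < k := by omega
  have hrow : rowI p1 (p2/3) ∈ T.tiles := by
    obtain ⟨h0, h1⟩ := hinv _ hik
    interval_cases p1
    · exact h0
    · exact h1
  have hprow : (p1, p2) ∈ rowI p1 (p2/3) := mem_rowI.mpr ⟨rfl, by simp; omega⟩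
  have hXeq := tile_unique T hX hrow hp hprow
  rw [hXeq] at hq
  rw [mem_rowI] at hq
  omega

def L1 (k : ℕ) : Finset (ℕ × ℕ) := {(0,3*k+1),(0,3*k),(1,3*k)}
def Lp1 (k : ℕ) : Finset (ℕ × ℕ) := {(0,3*k+2),(1,3*k+2),(1,3*k+1)}
def L2 (k : ℕ) : Finset (ℕ × ℕ) := {(1,3*k+1),(1,3*k),(0,3*k)}
def Lp2 (k : ℕ) : Finset (ℕ × ℕ) := {(1,3*k+2),(0,3*k+2),(0,3*k+1)}
def Y1 (k : ℕ) : Finset (ℕ × ℕ) := {(1,3*k+1),(1,3*k+2),(1,3*k+3)}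
def Z1 (k : ℕ) : Finset (ℕ × ℕ) := {(0,3*k+2),(0,3*k+3),(0,3*k+4)}
def W1 (k : ℕ) : Finset (ℕ × ℕ) := {(0,3*k+4),(0,3*k+3),(1,3*k+3)}
def Y2 (k : ℕ) : Finset (ℕ × ℕ) := {(0,3*k+1),(0,3*k+2),(0,3*k+3)}
def Z2 (k : ℕ) : Finset (ℕ × ℕ) := {(1,3*k+2),(1,3*k+3),(1,3*k+4)}
def W2 (k : ℕ) : Finset (ℕ × ℕ) := {(1,3*k+4),(1,3*k+3),(0,3*k+3)}

lemma ne_of_mem_not_mem {α : Type*} {S T : Finset α} {x : α}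
    (h1 : x ∈ S) (h2 : x ∉ T) : S ≠ T := fun h => h2 (h ▸ h1)

lemma adjH {r c d : ℕ} (h : c + 1 = d) : Adj (r,c) (r,d) := Or.inl ⟨rfl, Or.inl h⟩
lemma adjH' {r c d : ℕ} (h : d + 1 = c) : Adj (r,c) (r,d) := Or.inl ⟨rfl, Or.inr h⟩
lemma adjV {r s c : ℕ} (h : r + 1 = s) : Adj (r,c) (s,c) := Or.inr ⟨rfl, Or.inl h⟩
lemma adjV' {r s c : ℕ} (h : s + 1 = r) : Adj (r,c) (s,c) := Or.inr ⟨rfl, Or.inr h⟩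

lemma rowI_ne_of_high {r i k : ℕ} (hik : i < k) {X : Finset (ℕ × ℕ)} {q : ℕ × ℕ}
    (hq : q ∈ X) (hq2 : 3*k ≤ q.2) : rowI r i ≠ X := by
  intro h
  rw [← h, mem_rowI] at hq
  omega

lemma step1 {n k : ℕ} (T : Tiling 2 n 3) (hinv : BInv k T)
    (hL : L1 k ∈ T.tiles) (hp : Lp1 k ∈ T.tiles) :
    ∃ T' : Tiling 2 n 3, MetaAdj T T' ∧ BInv (k+1) T' := by
  obtain ⟨T', hMA, htiles⟩ := make_move (by norm_num) T (L1 k) (Lp1 k) (rowI 0 k) (rowI 1 k)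
    hL hp
    (ne_of_mem_not_mem (show (0,3*k) ∈ L1 k by simp [L1])
      (by simp [Lp1, Prod.ext_iff] <;> omega))
    (card_rowI 0 k) (card_rowI 1 k) (conn_rowI 0 k) (conn_rowI 1 k)
    (by rw [Finset.disjoint_left]; intro p h1 h2; rw [mem_rowI] at h1 h2; omega)
    (by ext ⟨x,y⟩; simp [rowI, L1, Lp1, Prod.ext_iff]; omega)
    (ne_of_mem_not_mem (show (0,3*k+2) ∈ rowI 0 k by rw [mem_rowI]; simp)
      (by simp [L1, Prod.ext_iff] <;> omega))
    (ne_of_mem_not_mem (show (0,3*k) ∈ rowI 0 k by rw [mem_rowI]; simp)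
      (by simp [Lp1, Prod.ext_iff] <;> omega))
    (ne_of_mem_not_mem (show (1,3*k+2) ∈ rowI 1 k by rw [mem_rowI]; simp)
      (by simp [L1, Prod.ext_iff] <;> omega))
    (ne_of_mem_not_mem (show (1,3*k) ∈ rowI 1 k by rw [mem_rowI]; simp)
      (by simp [Lp1, Prod.ext_iff] <;> omega))
  refine ⟨T', hMA, ?_⟩
  intro i hi
  rw [htiles]
  rcases Nat.lt_or_ge i k with hik | hik
  · obtain ⟨h0, h1⟩ := hinv i hik
    constructor <;> refine Finset.mem_union_left _ (Finset.mem_sdiff.mpr ⟨?_, ?_⟩)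
    · exact h0
    · simp only [Finset.mem_insert, Finset.mem_singleton]
      push_neg
      exact ⟨rowI_ne_of_high hik (show (0,3*k) ∈ L1 k by simp [L1]) (by simp),
        rowI_ne_of_high hik (show (0,3*k+2) ∈ Lp1 k by simp [Lp1]) (by simp <;> omega)⟩
    · exact h1
    · simp only [Finset.mem_insert, Finset.mem_singleton]
      push_neg
      exact ⟨rowI_ne_of_high hik (show (0,3*k) ∈ L1 k by simp [L1]) (by simp),
        rowI_ne_of_high hik (show (0,3*k+2) ∈ Lp1 k by simp [Lp1]) (by simp <;> omega)⟩
  · have : i = k := by omega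
    subst this
    constructor <;> refine Finset.mem_union_right _ ?_ <;> simp

set_option linter.unreachableTactic false
set_option linter.unusedTactic false

lemma step2 {n k : ℕ} (T : Tiling 2 n 3) (hinv : BInv k T)
    (hL : L2 k ∈ T.tiles) (hp : Lp2 k ∈ T.tiles) :
    ∃ T' : Tiling 2 n 3, MetaAdj T T' ∧ BInv (k+1) T' := by
  obtain ⟨T', hMA, htiles⟩ := make_move (by norm_num) T (L2 k) (Lp2 k) (rowI 0 k) (rowI 1 k)
    hL hp
    (ne_of_mem_not_mem (show (0,3*k) ∈ L2 k by simp [L2])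
      (by simp [Lp2, Prod.ext_iff] <;> omega))
    (card_rowI 0 k) (card_rowI 1 k) (conn_rowI 0 k) (conn_rowI 1 k)
    (by rw [Finset.disjoint_left]; intro p h1 h2; rw [mem_rowI] at h1 h2; omega)
    (by ext ⟨x,y⟩; simp [rowI, L2, Lp2, Prod.ext_iff]; omega)
    (ne_of_mem_not_mem (show (0,3*k+1) ∈ rowI 0 k by rw [mem_rowI]; simp)
      (by simp [L2, Prod.ext_iff] <;> omega))
    (ne_of_mem_not_mem (show (0,3*k) ∈ rowI 0 k by rw [mem_rowI]; simp)
      (by simp [Lp2, Prod.ext_iff] <;> omega))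
    (ne_of_mem_not_mem (show (1,3*k+2) ∈ rowI 1 k by rw [mem_rowI]; simp)
      (by simp [L2, Prod.ext_iff] <;> omega))
    (ne_of_mem_not_mem (show (1,3*k) ∈ rowI 1 k by rw [mem_rowI]; simp)
      (by simp [Lp2, Prod.ext_iff] <;> omega))
  refine ⟨T', hMA, ?_⟩
  intro i hi
  rw [htiles]
  rcases Nat.lt_or_ge i k with hik | hik
  · obtain ⟨h0, h1⟩ := hinv i hik
    constructor <;> refine Finset.mem_union_left _ (Finset.mem_sdiff.mpr ⟨?_, ?_⟩)
    · exact h0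
    · simp only [Finset.mem_insert, Finset.mem_singleton]
      push_neg
      exact ⟨rowI_ne_of_high hik (show (0,3*k) ∈ L2 k by simp [L2]) (by simp <;> omega),
        rowI_ne_of_high hik (show (0,3*k+1) ∈ Lp2 k by simp [Lp2]) (by simp <;> omega)⟩
    · exact h1
    · simp only [Finset.mem_insert, Finset.mem_singleton]
      push_neg
      exact ⟨rowI_ne_of_high hik (show (0,3*k) ∈ L2 k by simp [L2]) (by simp <;> omega),
        rowI_ne_of_high hik (show (0,3*k+1) ∈ Lp2 k by simp [Lp2]) (by simp <;> omega)⟩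
  · have : i = k := by omega
    subst this
    constructor <;> refine Finset.mem_union_right _ ?_ <;> simp

lemma stair1 {n k : ℕ} (T : Tiling 2 n 3) (hinv : BInv k T)
    (hL : L1 k ∈ T.tiles) (hY : Y1 k ∈ T.tiles) (hZ : Z1 k ∈ T.tiles) :
    ∃ T' : Tiling 2 n 3, MetaAdj T T' ∧ BInv k T' ∧
      L1 k ∈ T'.tiles ∧ Lp1 k ∈ T'.tiles := by
  obtain ⟨T', hMA, htiles⟩ := make_move (by norm_num) T (Y1 k) (Z1 k) (Lp1 k) (W1 k)
    hY hZ
    (ne_of_mem_not_mem (show (1,3*k+1) ∈ Y1 k by simp [Y1])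
      (by simp [Z1, Prod.ext_iff] <;> omega))
    (card3 (by simp [Prod.ext_iff]) (by simp [Prod.ext_iff] <;> omega)
      (by simp [Prod.ext_iff] <;> omega))
    (card3 (by simp [Prod.ext_iff] <;> omega) (by simp [Prod.ext_iff] <;> omega)
      (by simp [Prod.ext_iff] <;> omega))
    (conn3 (adjV rfl) (adjH' rfl))
    (conn3 (adjH' rfl) (adjV rfl))
    (by rw [Finset.disjoint_left]; rintro ⟨x,y⟩ h1 h2
        simp [Lp1, W1, Prod.ext_iff] at h1 h2; omega)
    (by ext ⟨x,y⟩; simp [Lp1, W1, Y1, Z1, Prod.ext_iff]; omega)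
    (ne_of_mem_not_mem (show (0,3*k+2) ∈ Lp1 k by simp [Lp1])
      (by simp [Y1, Prod.ext_iff] <;> omega))
    (ne_of_mem_not_mem (show (1,3*k+2) ∈ Lp1 k by simp [Lp1])
      (by simp [Z1, Prod.ext_iff] <;> omega))
    (ne_of_mem_not_mem (show (0,3*k+4) ∈ W1 k by simp [W1])
      (by simp [Y1, Prod.ext_iff] <;> omega))
    (ne_of_mem_not_mem (show (1,3*k+3) ∈ W1 k by simp [W1])
      (by simp [Z1, Prod.ext_iff] <;> omega))
  have hYhigh : ∀ i, i < k → rowI (0:ℕ) i ≠ Y1 k ∧ rowI (1:ℕ) i ≠ Y1 k ∧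
      rowI (0:ℕ) i ≠ Z1 k ∧ rowI (1:ℕ) i ≠ Z1 k := by
    intro i hik
    exact ⟨rowI_ne_of_high hik (show (1,3*k+1) ∈ Y1 k by simp [Y1]) (by simp <;> omega),
      rowI_ne_of_high hik (show (1,3*k+1) ∈ Y1 k by simp [Y1]) (by simp <;> omega),
      rowI_ne_of_high hik (show (0,3*k+2) ∈ Z1 k by simp [Z1]) (by simp <;> omega),
      rowI_ne_of_high hik (show (0,3*k+2) ∈ Z1 k by simp [Z1]) (by simp <;> omega)⟩
  refine ⟨T', hMA, ?_, ?_, ?_⟩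
  · intro i hik
    obtain ⟨h0, h1⟩ := hinv i hik
    obtain ⟨e1, e2, e3, e4⟩ := hYhigh i hik
    rw [htiles]
    constructor <;> refine Finset.mem_union_left _ (Finset.mem_sdiff.mpr ⟨?_, ?_⟩)
    · exact h0
    · simp only [Finset.mem_insert, Finset.mem_singleton]; push_neg; exact ⟨e1, e3⟩
    · exact h1
    · simp only [Finset.mem_insert, Finset.mem_singleton]; push_neg; exact ⟨e2, e4⟩
  · rw [htiles]
    refine Finset.mem_union_left _ (Finset.mem_sdiff.mpr ⟨hL, ?_⟩)
    simp only [Finset.mem_insert, Finset.mem_singleton]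
    push_neg
    exact ⟨ne_of_mem_not_mem (show (0,3*k) ∈ L1 k by simp [L1])
        (by simp [Y1, Prod.ext_iff] <;> omega),
      ne_of_mem_not_mem (show (0,3*k) ∈ L1 k by simp [L1])
        (by simp [Z1, Prod.ext_iff] <;> omega)⟩
  · rw [htiles]
    refine Finset.mem_union_right _ ?_
    simp

lemma stair2 {n k : ℕ} (T : Tiling 2 n 3) (hinv : BInv k T)
    (hL : L2 k ∈ T.tiles) (hY : Y2 k ∈ T.tiles) (hZ : Z2 k ∈ T.tiles) :
    ∃ T' : Tiling 2 n 3, MetaAdj T T' ∧ BInv k T' ∧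
      L2 k ∈ T'.tiles ∧ Lp2 k ∈ T'.tiles := by
  obtain ⟨T', hMA, htiles⟩ := make_move (by norm_num) T (Y2 k) (Z2 k) (Lp2 k) (W2 k)
    hY hZ
    (ne_of_mem_not_mem (show (0,3*k+1) ∈ Y2 k by simp [Y2])
      (by simp [Z2, Prod.ext_iff] <;> omega))
    (card3 (by simp [Prod.ext_iff]) (by simp [Prod.ext_iff] <;> omega)
      (by simp [Prod.ext_iff] <;> omega))
    (card3 (by simp [Prod.ext_iff] <;> omega) (by simp [Prod.ext_iff] <;> omega)
      (by simp [Prod.ext_iff] <;> omega))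
    (conn3 (adjV' rfl) (adjH' rfl))
    (conn3 (adjH' rfl) (adjV' rfl))
    (by rw [Finset.disjoint_left]; rintro ⟨x,y⟩ h1 h2
        simp [Lp2, W2, Prod.ext_iff] at h1 h2; omega)
    (by ext ⟨x,y⟩; simp [Lp2, W2, Y2, Z2, Prod.ext_iff]; omega)
    (ne_of_mem_not_mem (show (1,3*k+2) ∈ Lp2 k by simp [Lp2])
      (by simp [Y2, Prod.ext_iff] <;> omega))
    (ne_of_mem_not_mem (show (0,3*k+2) ∈ Lp2 k by simp [Lp2])
      (by simp [Z2, Prod.ext_iff] <;> omega))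
    (ne_of_mem_not_mem (show (1,3*k+4) ∈ W2 k by simp [W2])
      (by simp [Y2, Prod.ext_iff] <;> omega))
    (ne_of_mem_not_mem (show (0,3*k+3) ∈ W2 k by simp [W2])
      (by simp [Z2, Prod.ext_iff] <;> omega))
  have hYhigh : ∀ i, i < k → rowI (0:ℕ) i ≠ Y2 k ∧ rowI (1:ℕ) i ≠ Y2 k ∧
      rowI (0:ℕ) i ≠ Z2 k ∧ rowI (1:ℕ) i ≠ Z2 k := by
    intro i hik
    exact ⟨rowI_ne_of_high hik (show (0,3*k+1) ∈ Y2 k by simp [Y2]) (by simp <;> omega),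
      rowI_ne_of_high hik (show (0,3*k+1) ∈ Y2 k by simp [Y2]) (by simp <;> omega),
      rowI_ne_of_high hik (show (1,3*k+2) ∈ Z2 k by simp [Z2]) (by simp <;> omega),
      rowI_ne_of_high hik (show (1,3*k+2) ∈ Z2 k by simp [Z2]) (by simp <;> omega)⟩
  refine ⟨T', hMA, ?_, ?_, ?_⟩
  · intro i hik
    obtain ⟨h0, h1⟩ := hinv i hik
    obtain ⟨e1, e2, e3, e4⟩ := hYhigh i hik
    rw [htiles]
    constructor <;> refine Finset.mem_union_left _ (Finset.mem_sdiff.mpr ⟨?_, ?_⟩)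
    · exact h0
    · simp only [Finset.mem_insert, Finset.mem_singleton]; push_neg; exact ⟨e1, e3⟩
    · exact h1
    · simp only [Finset.mem_insert, Finset.mem_singleton]; push_neg; exact ⟨e2, e4⟩
  · rw [htiles]
    refine Finset.mem_union_left _ (Finset.mem_sdiff.mpr ⟨hL, ?_⟩)
    simp only [Finset.mem_insert, Finset.mem_singleton]
    push_neg
    exact ⟨ne_of_mem_not_mem (show (0,3*k) ∈ L2 k by simp [L2])
        (by simp [Y2, Prod.ext_iff] <;> omega),
      ne_of_mem_not_mem (show (0,3*k) ∈ L2 k by simp [L2])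
        (by simp [Z2, Prod.ext_iff] <;> omega)⟩
  · rw [htiles]
    refine Finset.mem_union_right _ ?_
    simp


lemma canon_tiles (n : ℕ) (h3 : 3 ∣ n) : (canon n h3).tiles = canonTiles n := rfl

lemma not_mem_of_tile_ne {n : ℕ} (T : Tiling 2 n 3) {X Y : Finset (ℕ × ℕ)}
    (hX : X ∈ T.tiles) (hY : Y ∈ T.tiles) (hne : Y ≠ X) :
    ∀ p ∈ Y, p ∉ X :=
  fun p hp hpX => hne (tile_unique T hY hX hp hpX)

lemma step {n k : ℕ} (T : Tiling 2 n 3) (hinv : BInv k T) (hk : 3*k + 3 ≤ n) :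
    ∃ T' : Tiling 2 n 3, Relation.ReflTransGen MetaAdj T T' ∧ BInv (k+1) T' := by
  have hc0 : ((0:ℕ), 3*k) ∈ gridCells 2 n := mem_grid_s3.mpr ⟨by norm_num, by simp <;> omega⟩
  obtain ⟨X, ⟨hX, hcX⟩, _⟩ := T.covers _ hc0
  have hXhigh : ∀ p ∈ X, 3*k ≤ p.2 := sealed T hinv hX hcX (by simp)
  obtain ⟨a1,a2,b1,b2,hXeq,hane,hbne,habne,ha1,hb1,ha2n,hb2n,hAdj1,hAdj2⟩ :=
    tile_data T hX hcX
  have haX : (a1,a2) ∈ X := by rw [hXeq]; simp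
  have hbX : (b1,b2) ∈ X := by rw [hXeq]; simp
  have ha2k : 3*k ≤ a2 := hXhigh _ haX
  have hb2k : 3*k ≤ b2 := hXhigh _ hbX
  simp [Adj] at hAdj1 hAdj2
  simp [Prod.ext_iff] at hane hbne habne
  have hcases : (a1 = 0 ∧ a2 = 3*k+1 ∧ b1 = 0 ∧ b2 = 3*k+2) ∨
      (a1 = 0 ∧ a2 = 3*k+1 ∧ b1 = 1 ∧ b2 = 3*k+1) ∨
      (a1 = 1 ∧ a2 = 3*k ∧ b1 = 1 ∧ b2 = 3*k+1) ∨
      ((a1 = 0 ∧ a2 = 3*k+1 ∧ b1 = 1 ∧ b2 = 3*k) ∨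
       (a1 = 1 ∧ a2 = 3*k ∧ b1 = 0 ∧ b2 = 3*k+1)) := by
    clear * - ha1 hb1 ha2k hb2k hAdj1 hAdj2 hane hbne habne
    rcases (by omega : a1 = 0 ∨ a1 = 1) with rfl|rfl <;>
      rcases (by omega : b1 = 0 ∨ b1 = 1) with rfl|rfl <;>
      (try simp only [eq_self_iff_true, true_implies, Nat.one_ne_zero, Nat.zero_ne_one, false_implies, forall_const] at hane hbne habne) <;>
      rcases hAdj1 with ⟨h,h'|h'⟩|⟨h,h'⟩ <;>
      rcases hAdj2 with (⟨g,g'|g'⟩|⟨g,g'|g'⟩)|(⟨g,g'|g'⟩|⟨g,g'⟩) <;> omega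
  rcases hcases with ⟨rfl,rfl,rfl,rfl⟩ | ⟨rfl,rfl,rfl,rfl⟩ | ⟨rfl,rfl,rfl,rfl⟩ | hL1
  -- Case I0 : X is the top bar
  · have hXI : X = rowI 0 k := by
      rw [hXeq]; ext ⟨x,y⟩; simp [rowI, Prod.ext_iff] <;> omega
    have hc1 : ((1:ℕ), 3*k) ∈ gridCells 2 n := mem_grid_s3.mpr ⟨by norm_num, by simp <;> omega⟩
    obtain ⟨Y, ⟨hY, hcY⟩, _⟩ := T.covers _ hc1
    have hYX : Y ≠ X := by
      intro h; rw [h, hXeq] at hcY; simp [Prod.ext_iff] at hcY <;> omega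
    have hYnX := not_mem_of_tile_ne T hX hY hYX
    have hYhigh : ∀ p ∈ Y, 3*k ≤ p.2 := sealed T hinv hY hcY (by simp)
    obtain ⟨c1,c2,d1,d2,hYeq,hcne,hdne,hcdne,hc1',hd1,hc2n,hd2n,hAd1,hAd2⟩ :=
      tile_data T hY hcY
    have hcY2 : (c1,c2) ∈ Y := by rw [hYeq]; simp
    have hdY2 : (d1,d2) ∈ Y := by rw [hYeq]; simp
    have hc2k : 3*k ≤ c2 := hYhigh _ hcY2
    have hd2k : 3*k ≤ d2 := hYhigh _ hdY2
    have hcnX := hYnX _ hcY2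
    have hdnX := hYnX _ hdY2
    rw [hXeq] at hcnX hdnX
    simp [Prod.ext_iff] at hcnX hdnX
    simp [Adj] at hAd1 hAd2
    simp [Prod.ext_iff] at hcne hdne hcdne
    have : c1 = 1 ∧ c2 = 3*k+1 ∧ d1 = 1 ∧ d2 = 3*k+2 := by
      clear * - hc1' hd1 hc2k hd2k hAd1 hAd2 hcne hdne hcdne hcnX hdnX
      rcases (by omega : c1 = 0 ∨ c1 = 1) with rfl|rfl <;>
      rcases (by omega : d1 = 0 ∨ d1 = 1) with rfl|rfl <;>
      (try simp only [eq_self_iff_true, true_implies, Nat.one_ne_zero, Nat.zero_ne_one, false_implies, forall_const] at hcne hdne hcdne hcnX hdnX) <;>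
      rcases hAd1 with ⟨h,h'|h'⟩|⟨h,h'⟩ <;>
      rcases hAd2 with (⟨g,g'|g'⟩|⟨g,g'|g'⟩)|(⟨g,g'|g'⟩|⟨g,g'⟩) <;> omega
    obtain ⟨rfl,rfl,rfl,rfl⟩ := this
    have hYI : Y = rowI 1 k := by
      rw [hYeq]; ext ⟨x,y⟩; simp [rowI, Prod.ext_iff] <;> omega
    refine ⟨T, Relation.ReflTransGen.refl, ?_⟩
    intro i hi
    rcases Nat.lt_or_ge i k with hik | hik
    · exact hinv i hik
    · have : i = k := by omega
      subst this
      exact ⟨hXI ▸ hX, hYI ▸ hY⟩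
  -- Case Lup : impossible
  · exfalso
    have hc1 : ((1:ℕ), 3*k) ∈ gridCells 2 n := mem_grid_s3.mpr ⟨by norm_num, by simp <;> omega⟩
    obtain ⟨Y, ⟨hY, hcY⟩, _⟩ := T.covers _ hc1
    have hYX : Y ≠ X := by
      intro h; rw [h, hXeq] at hcY; simp [Prod.ext_iff] at hcY <;> omega
    have hYnX := not_mem_of_tile_ne T hX hY hYX
    have hYhigh : ∀ p ∈ Y, 3*k ≤ p.2 := sealed T hinv hY hcY (by simp)
    obtain ⟨c1,c2,d1,d2,hYeq,hcne,hdne,hcdne,hc1',hd1,hc2n,hd2n,hAd1,hAd2⟩ :=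
      tile_data T hY hcY
    have hcY2 : (c1,c2) ∈ Y := by rw [hYeq]; simp
    have hc2k : 3*k ≤ c2 := hYhigh _ hcY2
    have hcnX := hYnX _ hcY2
    rw [hXeq] at hcnX
    simp [Prod.ext_iff] at hcnX
    simp [Adj] at hAd1
    simp [Prod.ext_iff] at hcne
    clear * - hc1' hc2k hAd1 hcnX hcne
    rcases (by omega : c1 = 0 ∨ c1 = 1) with rfl|rfl <;>
      (try simp only [eq_self_iff_true, true_implies, Nat.one_ne_zero, Nat.zero_ne_one, false_implies, forall_const] at hcne hcnX) <;>
      rcases hAd1 with ⟨h,h'|h'⟩|⟨h,h'⟩ <;> omega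
  -- Case L2 : X = L2 k
  · have hXL : X = L2 k := by
      rw [hXeq]; ext ⟨x,y⟩; simp [L2, Prod.ext_iff] <;> omega
    have hc1 : ((0:ℕ), 3*k+1) ∈ gridCells 2 n := mem_grid_s3.mpr ⟨by norm_num, by simp <;> omega⟩
    obtain ⟨Y, ⟨hY, hcY⟩, _⟩ := T.covers _ hc1
    have hYX : Y ≠ X := by
      intro h; rw [h, hXeq] at hcY; simp [Prod.ext_iff] at hcY <;> omega
    have hYnX := not_mem_of_tile_ne T hX hY hYX
    have hYhigh : ∀ p ∈ Y, 3*k ≤ p.2 := sealed T hinv hY hcY (by simp <;> omega)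
    obtain ⟨c1,c2,d1,d2,hYeq,hcne,hdne,hcdne,hc1',hd1,hc2n,hd2n,hAd1,hAd2⟩ :=
      tile_data T hY hcY
    have hcY2 : (c1,c2) ∈ Y := by rw [hYeq]; simp
    have hdY2 : (d1,d2) ∈ Y := by rw [hYeq]; simp
    have hc2k : 3*k ≤ c2 := hYhigh _ hcY2
    have hd2k : 3*k ≤ d2 := hYhigh _ hdY2
    have hcnX := hYnX _ hcY2
    have hdnX := hYnX _ hdY2
    rw [hXeq] at hcnX hdnX
    simp [Prod.ext_iff] at hcnX hdnX
    simp [Adj] at hAd1 hAd2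
    simp [Prod.ext_iff] at hcne hdne hcdne
    have hYcases : (c1 = 0 ∧ c2 = 3*k+2) ∧ ((d1 = 1 ∧ d2 = 3*k+2) ∨ (d1 = 0 ∧ d2 = 3*k+3)) := by
      clear * - hc1' hd1 hc2k hd2k hAd1 hAd2 hcne hdne hcdne hcnX hdnX
      rcases (by omega : c1 = 0 ∨ c1 = 1) with rfl|rfl <;>
      rcases (by omega : d1 = 0 ∨ d1 = 1) with rfl|rfl <;>
      (try simp only [eq_self_iff_true, true_implies, Nat.one_ne_zero, Nat.zero_ne_one, false_implies, forall_const] at hcne hdne hcdne hcnX hdnX) <;>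
      rcases hAd1 with ⟨h,h'|h'⟩|⟨h,h'⟩ <;>
      rcases hAd2 with (⟨g,g'|g'⟩|⟨g,g'|g'⟩)|(⟨g,g'|g'⟩|⟨g,g'⟩) <;> omega
    obtain ⟨⟨rfl, rfl⟩, hd⟩ := hYcases
    rcases hd with ⟨rfl, rfl⟩ | ⟨rfl, rfl⟩
    · -- Y = Lp2 : one move
      have hYL : Y = Lp2 k := by
        rw [hYeq]; ext ⟨x,y⟩; simp [Lp2, Prod.ext_iff] <;> omega
      obtain ⟨T', hMA, hinv'⟩ := step2 T hinv (hXL ▸ hX) (hYL ▸ hY)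
      exact ⟨T', Relation.ReflTransGen.single hMA, hinv'⟩
    · -- Y = Y2 : staircase, two moves
      have hYL : Y = Y2 k := by
        rw [hYeq]; ext ⟨x,y⟩; simp [Y2, Prod.ext_iff] <;> omega
      have hc2g : ((1:ℕ), 3*k+2) ∈ gridCells 2 n := mem_grid_s3.mpr ⟨by norm_num, by simp <;> omega⟩
      obtain ⟨Z, ⟨hZ, hcZ⟩, _⟩ := T.covers _ hc2g
      have hZX : Z ≠ X := by
        intro h; rw [h, hXeq] at hcZ; simp [Prod.ext_iff] at hcZ <;> omega
      have hZY : Z ≠ Y := by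
        intro h; rw [h, hYeq] at hcZ; simp [Prod.ext_iff] at hcZ <;> omega
      have hZnX := not_mem_of_tile_ne T hX hZ hZX
      have hZnY := not_mem_of_tile_ne T hY hZ hZY
      have hZhigh : ∀ p ∈ Z, 3*k ≤ p.2 := sealed T hinv hZ hcZ (by simp <;> omega)
      obtain ⟨e1,e2,f1,f2,hZeq,hene,hfne,hefne,he1,hf1,he2n,hf2n,hAe1,hAe2⟩ :=
        tile_data T hZ hcZ
      have heZ : (e1,e2) ∈ Z := by rw [hZeq]; simp
      have hfZ : (f1,f2) ∈ Z := by rw [hZeq]; simp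
      have he2k : 3*k ≤ e2 := hZhigh _ heZ
      have hf2k : 3*k ≤ f2 := hZhigh _ hfZ
      have henX := hZnX _ heZ
      have hfnX := hZnX _ hfZ
      have henY := hZnY _ heZ
      have hfnY := hZnY _ hfZ
      rw [hXeq] at henX hfnX
      rw [hYeq] at henY hfnY
      simp [Prod.ext_iff] at henX hfnX henY hfnY
      simp [Adj] at hAe1 hAe2
      simp [Prod.ext_iff] at hene hfne hefne
      have hZcases : e1 = 1 ∧ e2 = 3*k+3 ∧ f1 = 1 ∧ f2 = 3*k+4 := by
        clear * - he1 hf1 he2k hf2k hAe1 hAe2 hene hfne hefne henX hfnX henY hfnY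
        rcases (by omega : e1 = 0 ∨ e1 = 1) with rfl|rfl <;>
      rcases (by omega : f1 = 0 ∨ f1 = 1) with rfl|rfl <;>
      (try simp only [eq_self_iff_true, true_implies, Nat.one_ne_zero, Nat.zero_ne_one, false_implies, forall_const] at hene hfne hefne henX hfnX henY hfnY) <;>
      rcases hAe1 with ⟨h,h'|h'⟩|⟨h,h'⟩ <;>
      rcases hAe2 with (⟨g,g'|g'⟩|⟨g,g'|g'⟩)|(⟨g,g'|g'⟩|⟨g,g'⟩) <;> omega
      obtain ⟨rfl,rfl,rfl,rfl⟩ := hZcases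
      have hZL : Z = Z2 k := by
        rw [hZeq]; ext ⟨x,y⟩; simp [Z2, Prod.ext_iff] <;> omega
      obtain ⟨T₁, hMA1, hinv1, hL1', hp1'⟩ := stair2 T hinv (hXL ▸ hX) (hYL ▸ hY) (hZL ▸ hZ)
      obtain ⟨T₂, hMA2, hinv2⟩ := step2 T₁ hinv1 hL1' hp1'
      exact ⟨T₂, (Relation.ReflTransGen.single hMA1).tail hMA2, hinv2⟩
  -- Case L1 : X = L1 k
  · have hXL : X = L1 k := by
      rcases hL1 with ⟨rfl,rfl,rfl,rfl⟩ | ⟨rfl,rfl,rfl,rfl⟩ <;>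
        · rw [hXeq]; ext ⟨x,y⟩; simp [L1, Prod.ext_iff] <;> omega
    have hXeq' : X = ({(0,3*k),(0,3*k+1),(1,3*k)} : Finset (ℕ × ℕ)) := by
      rw [hXL]; ext ⟨x,y⟩; simp [L1, Prod.ext_iff] <;> omega
    clear hXeq hL1 hane hbne habne hAdj1 hAdj2 haX hbX ha2k hb2k ha1 hb1 ha2n hb2n
    have hc1 : ((1:ℕ), 3*k+1) ∈ gridCells 2 n := mem_grid_s3.mpr ⟨by norm_num, by simp <;> omega⟩
    obtain ⟨Y, ⟨hY, hcY⟩, _⟩ := T.covers _ hc1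
    have hYX : Y ≠ X := by
      intro h; rw [h, hXeq'] at hcY; simp [Prod.ext_iff] at hcY <;> omega
    have hYnX := not_mem_of_tile_ne T hX hY hYX
    have hYhigh : ∀ p ∈ Y, 3*k ≤ p.2 := sealed T hinv hY hcY (by simp <;> omega)
    obtain ⟨c1,c2,d1,d2,hYeq,hcne,hdne,hcdne,hc1',hd1,hc2n,hd2n,hAd1,hAd2⟩ :=
      tile_data T hY hcY
    have hcY2 : (c1,c2) ∈ Y := by rw [hYeq]; simp
    have hdY2 : (d1,d2) ∈ Y := by rw [hYeq]; simp
    have hc2k : 3*k ≤ c2 := hYhigh _ hcY2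
    have hd2k : 3*k ≤ d2 := hYhigh _ hdY2
    have hcnX := hYnX _ hcY2
    have hdnX := hYnX _ hdY2
    rw [hXeq'] at hcnX hdnX
    simp [Prod.ext_iff] at hcnX hdnX
    simp [Adj] at hAd1 hAd2
    simp [Prod.ext_iff] at hcne hdne hcdne
    have hYcases : (c1 = 1 ∧ c2 = 3*k+2) ∧ ((d1 = 0 ∧ d2 = 3*k+2) ∨ (d1 = 1 ∧ d2 = 3*k+3)) := by
      clear * - hc1' hd1 hc2k hd2k hAd1 hAd2 hcne hdne hcdne hcnX hdnX
      rcases (by omega : c1 = 0 ∨ c1 = 1) with rfl|rfl <;>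
      rcases (by omega : d1 = 0 ∨ d1 = 1) with rfl|rfl <;>
      (try simp only [eq_self_iff_true, true_implies, Nat.one_ne_zero, Nat.zero_ne_one, false_implies, forall_const] at hcne hdne hcdne hcnX hdnX) <;>
      rcases hAd1 with ⟨h,h'|h'⟩|⟨h,h'⟩ <;>
      rcases hAd2 with (⟨g,g'|g'⟩|⟨g,g'|g'⟩)|(⟨g,g'|g'⟩|⟨g,g'⟩) <;> omega
    obtain ⟨⟨rfl, rfl⟩, hd⟩ := hYcases
    rcases hd with ⟨rfl, rfl⟩ | ⟨rfl, rfl⟩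
    · -- Y = Lp1 : one move
      have hYL : Y = Lp1 k := by
        rw [hYeq]; ext ⟨x,y⟩; simp [Lp1, Prod.ext_iff] <;> omega
      obtain ⟨T', hMA, hinv'⟩ := step1 T hinv (hXL ▸ hX) (hYL ▸ hY)
      exact ⟨T', Relation.ReflTransGen.single hMA, hinv'⟩
    · -- Y = Y1 : staircase, two moves
      have hYL : Y = Y1 k := by
        rw [hYeq]; ext ⟨x,y⟩; simp [Y1, Prod.ext_iff] <;> omega
      have hc2g : ((0:ℕ), 3*k+2) ∈ gridCells 2 n := mem_grid_s3.mpr ⟨by norm_num, by simp <;> omega⟩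
      obtain ⟨Z, ⟨hZ, hcZ⟩, _⟩ := T.covers _ hc2g
      have hZX : Z ≠ X := by
        intro h; rw [h, hXeq'] at hcZ; simp [Prod.ext_iff] at hcZ <;> omega
      have hZY : Z ≠ Y := by
        intro h; rw [h, hYeq] at hcZ; simp [Prod.ext_iff] at hcZ <;> omega
      have hZnX := not_mem_of_tile_ne T hX hZ hZX
      have hZnY := not_mem_of_tile_ne T hY hZ hZY
      have hZhigh : ∀ p ∈ Z, 3*k ≤ p.2 := sealed T hinv hZ hcZ (by simp <;> omega)
      obtain ⟨e1,e2,f1,f2,hZeq,hene,hfne,hefne,he1,hf1,he2n,hf2n,hAe1,hAe2⟩ :=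
        tile_data T hZ hcZ
      have heZ : (e1,e2) ∈ Z := by rw [hZeq]; simp
      have hfZ : (f1,f2) ∈ Z := by rw [hZeq]; simp
      have he2k : 3*k ≤ e2 := hZhigh _ heZ
      have hf2k : 3*k ≤ f2 := hZhigh _ hfZ
      have henX := hZnX _ heZ
      have hfnX := hZnX _ hfZ
      have henY := hZnY _ heZ
      have hfnY := hZnY _ hfZ
      rw [hXeq'] at henX hfnX
      rw [hYeq] at henY hfnY
      simp [Prod.ext_iff] at henX hfnX henY hfnY
      simp [Adj] at hAe1 hAe2
      simp [Prod.ext_iff] at hene hfne hefne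
      have hZcases : e1 = 0 ∧ e2 = 3*k+3 ∧ f1 = 0 ∧ f2 = 3*k+4 := by
        clear * - he1 hf1 he2k hf2k hAe1 hAe2 hene hfne hefne henX hfnX henY hfnY
        rcases (by omega : e1 = 0 ∨ e1 = 1) with rfl|rfl <;>
      rcases (by omega : f1 = 0 ∨ f1 = 1) with rfl|rfl <;>
      (try simp only [eq_self_iff_true, true_implies, Nat.one_ne_zero, Nat.zero_ne_one, false_implies, forall_const] at hene hfne hefne henX hfnX henY hfnY) <;>
      rcases hAe1 with ⟨h,h'|h'⟩|⟨h,h'⟩ <;>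
      rcases hAe2 with (⟨g,g'|g'⟩|⟨g,g'|g'⟩)|(⟨g,g'|g'⟩|⟨g,g'⟩) <;> omega
      obtain ⟨rfl,rfl,rfl,rfl⟩ := hZcases
      have hZL : Z = Z1 k := by
        rw [hZeq]; ext ⟨x,y⟩; simp [Z1, Prod.ext_iff] <;> omega
      obtain ⟨T₁, hMA1, hinv1, hL1', hp1'⟩ := stair1 T hinv (hXL ▸ hX) (hYL ▸ hY) (hZL ▸ hZ)
      obtain ⟨T₂, hMA2, hinv2⟩ := step1 T₁ hinv1 hL1' hp1'
      exact ⟨T₂, (Relation.ReflTransGen.single hMA1).tail hMA2, hinv2⟩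

lemma rowI_inj {r i r' i' : ℕ} (h : rowI r i = rowI r' i') : r = r' ∧ i = i' := by
  have hm : ((r:ℕ), 3*i) ∈ rowI r i := mem_rowI.mpr ⟨rfl, Or.inl rfl⟩
  rw [h, mem_rowI] at hm
  simp at hm
  omega

lemma card_canonTiles (n : ℕ) : (canonTiles n).card = 2 * (n/3) := by
  rw [canonTiles, Finset.card_image_of_injOn, Finset.card_product, Finset.card_range,
    Finset.card_range]
  rintro ⟨r,i⟩ _ ⟨r',i'⟩ _ h
  obtain ⟨h1, h2⟩ := rowI_inj h
  exact Prod.ext h1 h2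

lemma tiles_card {n : ℕ} (T : Tiling 2 n 3) : T.tiles.card * 3 = 2 * n := by
  have hdisj : ∀ X ∈ T.tiles, ∀ Y ∈ T.tiles, X ≠ Y → Disjoint (id X) (id Y) := by
    intro X hX Y hY hne
    rw [Finset.disjoint_left]
    intro p hpX hpY
    exact hne (tile_unique T hX hY hpX hpY)
  have hbU : T.tiles.biUnion id = gridCells 2 n := by
    ext p
    simp only [Finset.mem_biUnion, id]
    constructor
    · rintro ⟨X, hX, hpX⟩
      exact T.subset X hX hpX
    · intro hp
      obtain ⟨X, ⟨hX, hpX⟩, _⟩ := T.covers p hp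
      exact ⟨X, hX, hpX⟩
  have h1 := Finset.card_biUnion hdisj
  rw [hbU] at h1
  have h2 : (gridCells 2 n).card = 2 * n := by
    rw [gridCells, Finset.card_product, Finset.card_range, Finset.card_range]
  have h3 : ∑ X ∈ T.tiles, (id X).card = ∑ _X ∈ T.tiles, 3 :=
    Finset.sum_congr rfl fun X hX => T.card_tile X hX
  have h4 : ∑ X ∈ T.tiles, (id X).card = T.tiles.card * 3 := by
    rw [h3, Finset.sum_const, smul_eq_mul]
  omega

lemma toCanon {n : ℕ} (h3 : 3 ∣ n) :
    ∀ m k, 3*k + 3*m = n → ∀ T : Tiling 2 n 3, BInv k T →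
      Relation.ReflTransGen MetaAdj T (canon n h3) := by
  intro m
  induction m with
  | zero =>
    intro k hkn T hinv
    have hsub : canonTiles n ⊆ T.tiles := by
      intro X hX
      obtain ⟨r, hr, i, hi, rfl⟩ := mem_canonTiles.mp hX
      have hik : i < k := by omega
      obtain ⟨h0, h1⟩ := hinv i hik
      interval_cases r
      · exact h0
      · exact h1
    have hc1 := tiles_card T
    have hc2 := card_canonTiles n
    have hle : T.tiles.card ≤ (canonTiles n).card := by omega
    have htiles : T.tiles = canonTiles n :=
      (Finset.eq_of_subset_of_card_le hsub hle).symm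
    have : T = canon n h3 := tiling_ext (by rw [htiles, canon_tiles])
    rw [this]
  | succ m ih =>
    intro k hkn T hinv
    obtain ⟨T', hpath, hinv'⟩ := step T hinv (by omega)
    exact hpath.trans (ih (k+1) (by omega) T' hinv')

/-- For any positive n divisible by 3, the metagraph of 3-omino tilings of the 2×n grid
is connected. -/
theorem stmt_3 (n : ℕ) (hn : 0 < n) (h3 : 3 ∣ n) (T₁ T₂ : Tiling 2 n 3) :
    Relation.ReflTransGen (MetaAdj (m := 2) (n := n) (t := 3)) T₁ T₂ := by
  have hdiv : 3 * (n / 3) = n := Nat.mul_div_cancel' h3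
  have hzero : ∀ T : Tiling 2 n 3, BInv 0 T := by
    intro T i hi
    exact absurd hi (Nat.not_lt_zero i)
  have h1 := toCanon h3 (n/3) 0 (by omega) T₁ (hzero T₁)
  have h2 := toCanon h3 (n/3) 0 (by omega) T₂ (hzero T₂)
  have hsym : Symmetric (MetaAdj (m := 2) (n := n) (t := 3)) := fun A B h => ⟨h.2, h.1⟩
  haveI : Std.Symm (MetaAdj (m := 2) (n := n) (t := 3)) := ⟨fun a b h => hsym h⟩
  exact h1.trans ((Relation.ReflTransGen.symmetric (r := MetaAdj (m := 2) (n := n) (t := 3))).symm _ _ h2)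
end

section
/- There exists a tiling of the 6×6 grid by 3-ominoes that admits no recombination move: for every pair of distinct tiles, the only way to partition the union of their 6 cells into two connected sets of size 3 is the original pair. -/
/-! ### Auxiliary decidable connectivity machinery -/

instance : DecidableRel Adj := fun p q => by unfold Adj; infer_instance

lemma Adj.symm' {a b : ℕ × ℕ} (h : Adj a b) : Adj b a := by
  unfold Adj at *; tauto

def nbhd (S A : Finset (ℕ × ℕ)) : Finset (ℕ × ℕ) :=
  S.filter (fun b => b ∈ A ∨ ∃ a ∈ A, Adj a b)

/-- Computable connectivity check. -/
def ConnB (S : Finset (ℕ × ℕ)) : Prop :=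
  ∀ p ∈ S, ((nbhd S)^[S.card] {p}).card = S.card

instance : DecidablePred ConnB := fun S => by unfold ConnB; infer_instance

lemma nbhd_subset (S A : Finset (ℕ × ℕ)) : nbhd S A ⊆ S := Finset.filter_subset _ _

lemma subset_nbhd {S A : Finset (ℕ × ℕ)} (h : A ⊆ S) : A ⊆ nbhd S A := by
  intro b hb
  exact Finset.mem_filter.mpr ⟨h hb, Or.inl hb⟩

lemma iter_subset {S : Finset (ℕ × ℕ)} {p : ℕ × ℕ} (hp : p ∈ S) :
    ∀ k, (nbhd S)^[k] {p} ⊆ S := by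
  intro k
  cases k with
  | zero => simpa using Finset.singleton_subset_iff.mpr hp
  | succ k => rw [Function.iterate_succ_apply']; exact nbhd_subset _ _

lemma iter_succ_supset {S : Finset (ℕ × ℕ)} {p : ℕ × ℕ} (hp : p ∈ S) (k : ℕ) :
    (nbhd S)^[k] {p} ⊆ (nbhd S)^[k + 1] {p} := by
  rw [Function.iterate_succ_apply']
  exact subset_nbhd (iter_subset hp k)

lemma iter_mono {S : Finset (ℕ × ℕ)} {p : ℕ × ℕ} (hp : p ∈ S) {j k : ℕ} (h : j ≤ k) :
    (nbhd S)^[j] {p} ⊆ (nbhd S)^[k] {p} := by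
  induction k with
  | zero => simp_all
  | succ k ih =>
    rcases Nat.lt_or_ge j (k + 1) with h' | h'
    · exact (ih (Nat.lt_succ_iff.mp h')).trans (iter_succ_supset hp k)
    · have : j = k + 1 := le_antisymm h h'
      subst this; exact Finset.Subset.refl _

lemma reach_of_iter {S : Finset (ℕ × ℕ)} {p : ℕ × ℕ} (hp : p ∈ S) :
    ∀ k, ∀ q ∈ (nbhd S)^[k] {p},
      Relation.ReflTransGen (fun a b => a ∈ S ∧ b ∈ S ∧ Adj a b) p q := by
  intro k
  induction k with
  | zero => intro q hq; simp at hq; subst hq; exact Relation.ReflTransGen.refl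
  | succ k ih =>
    intro q hq
    rw [Function.iterate_succ_apply'] at hq
    obtain ⟨hqS, hcase⟩ := Finset.mem_filter.mp hq
    rcases hcase with h | ⟨a, ha, hadj⟩
    · exact ih q h
    · exact Relation.ReflTransGen.tail (ih a ha) ⟨iter_subset hp k ha, hqS, hadj⟩

lemma stab_forever {S : Finset (ℕ × ℕ)} {p : ℕ × ℕ} {j : ℕ}
    (h : (nbhd S)^[j] {p} = (nbhd S)^[j + 1] {p}) :
    ∀ i, (nbhd S)^[j + i] {p} = (nbhd S)^[j] {p} := by
  intro i
  induction i with
  | zero => rfl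
  | succ i ih =>
    show (nbhd S)^[(j + i) + 1] {p} = (nbhd S)^[j] {p}
    rw [Function.iterate_succ_apply', ih]
    conv_rhs => rw [h]
    exact (Function.iterate_succ_apply' _ _ _).symm

lemma grow {S : Finset (ℕ × ℕ)} {p : ℕ × ℕ} (hp : p ∈ S) :
    ∀ k, (∀ j < k, (nbhd S)^[j] {p} ≠ (nbhd S)^[j + 1] {p}) →
      k + 1 ≤ ((nbhd S)^[k] {p}).card := by
  intro k
  induction k with
  | zero => intro _; simp
  | succ k ih =>
    intro h
    have h1 : k + 1 ≤ ((nbhd S)^[k] {p}).card := ih (fun j hj => h j (hj.trans (Nat.lt_succ_self k)))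
    have h2 : (nbhd S)^[k] {p} ⊂ (nbhd S)^[k + 1] {p} :=
      (Finset.ssubset_iff_subset_ne).mpr ⟨iter_succ_supset hp k, h k (Nat.lt_succ_self k)⟩
    exact Nat.succ_le_of_lt (lt_of_le_of_lt h1 (Finset.card_lt_card h2))

lemma iter_fixed {S : Finset (ℕ × ℕ)} {p : ℕ × ℕ} (hp : p ∈ S) :
    nbhd S ((nbhd S)^[S.card] {p}) = (nbhd S)^[S.card] {p} := by
  by_cases h : ∃ j < S.card, (nbhd S)^[j] {p} = (nbhd S)^[j + 1] {p}
  · obtain ⟨j, hj, hfix⟩ := h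
    have key : ∀ n, j ≤ n → (nbhd S)^[n] {p} = (nbhd S)^[j] {p} := by
      intro n hn
      have := stab_forever hfix (n - j)
      rwa [Nat.add_sub_cancel' hn] at this
    have e1 : (nbhd S)^[S.card] {p} = (nbhd S)^[j] {p} := key _ (le_of_lt hj)
    have e2 : (nbhd S)^[S.card + 1] {p} = (nbhd S)^[j] {p} :=
      key _ (le_of_lt (hj.trans (Nat.lt_succ_self _)))
    calc nbhd S ((nbhd S)^[S.card] {p})
        = (nbhd S)^[S.card + 1] {p} := (Function.iterate_succ_apply' _ _ _).symm
      _ = (nbhd S)^[j] {p} := e2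
      _ = (nbhd S)^[S.card] {p} := e1.symm
  · push_neg at h
    have := grow hp S.card h
    have hle := Finset.card_le_card (iter_subset hp S.card)
    omega

lemma connectedIn_iff_connB (S : Finset (ℕ × ℕ)) : ConnectedIn S ↔ ConnB S := by
  constructor
  · intro h p hp
    have hsub : S ⊆ (nbhd S)^[S.card] {p} := by
      intro q hq
      have hreach := h p hp q hq
      clear hq
      induction hreach with
      | refl => exact iter_mono hp (Nat.zero_le _) (Finset.mem_singleton_self p)
      | @tail b c hb hrel ih =>
        have hbmem : b ∈ (nbhd S)^[S.card] {p} := ih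
        have : c ∈ nbhd S ((nbhd S)^[S.card] {p}) :=
          Finset.mem_filter.mpr ⟨hrel.2.1, Or.inr ⟨b, hbmem, hrel.2.2⟩⟩
        rwa [iter_fixed hp] at this
    exact le_antisymm (Finset.card_le_card (iter_subset hp _)) (Finset.card_le_card hsub)
  · intro h p hp q hq
    have heq : (nbhd S)^[S.card] {p} = S :=
      Finset.eq_of_subset_of_card_le (iter_subset hp _) (le_of_eq (h p hp).symm)
    exact reach_of_iter hp S.card q (by rw [heq]; exact hq)

/-- If no cell of `T₁` is adjacent to a cell of `T₂`, a connected subset of their union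
lies inside one of them. -/
lemma nonadj_split {T1 T2 S1 : Finset (ℕ × ℕ)}
    (hnadj : ∀ a ∈ T1, ∀ b ∈ T2, ¬ Adj a b)
    (hsub : S1 ⊆ T1 ∪ T2) (hconn : ConnectedIn S1) : S1 ⊆ T1 ∨ S1 ⊆ T2 := by
  by_cases h1 : S1 ⊆ T1
  · exact Or.inl h1
  · right
    obtain ⟨a, ha, haT1⟩ := Finset.not_subset.mp h1
    have haT2 : a ∈ T2 := (Finset.mem_union.mp (hsub ha)).resolve_left haT1
    intro x hx
    have hreach := hconn a ha x hx
    clear hx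
    induction hreach with
    | refl => exact haT2
    | @tail b c hb hrel ih =>
      rcases Finset.mem_union.mp (hsub hrel.2.1) with hc | hc
      · exact absurd hrel.2.2.symm' (hnadj c hc b ih)
      · exact hc

def tilesA : Finset (Finset (ℕ × ℕ)) :=
  { {(0,0),(1,0),(1,1)}, {(0,1),(0,2),(0,3)}, {(0,4),(1,3),(1,4)}, {(0,5),(1,5),(2,5)},
    {(1,2),(2,1),(2,2)}, {(2,0),(3,0),(3,1)}, {(2,3),(2,4),(3,4)}, {(3,2),(3,3),(4,2)},
    {(3,5),(4,5),(5,5)}, {(4,0),(4,1),(5,0)}, {(4,3),(4,4),(5,4)}, {(5,1),(5,2),(5,3)} }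

def tilesB : Finset (Finset (ℕ × ℕ)) :=
  { {(0,0),(0,1),(0,2)}, {(0,3),(0,4),(0,5)}, {(1,0),(1,1),(1,2)}, {(1,3),(1,4),(1,5)},
    {(2,0),(2,1),(2,2)}, {(2,3),(2,4),(2,5)}, {(3,0),(3,1),(3,2)}, {(3,3),(3,4),(3,5)},
    {(4,0),(4,1),(4,2)}, {(4,3),(4,4),(4,5)}, {(5,0),(5,1),(5,2)}, {(5,3),(5,4),(5,5)} }

/-- Build a tiling from decidable data. -/
def mkTiling (tiles : Finset (Finset (ℕ × ℕ)))
    (hcov : ∀ c ∈ gridCells 6 6, ∃ T ∈ tiles, c ∈ T ∧ ∀ T' ∈ tiles, c ∈ T' → T' = T)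
    (hsub : ∀ T ∈ tiles, T ⊆ gridCells 6 6)
    (hcard : ∀ T ∈ tiles, T.card = 3)
    (hconn : ∀ T ∈ tiles, ConnB T) : Tiling 6 6 3 where
  tiles := tiles
  covers := by
    intro c hc
    obtain ⟨T, hT, hcT, huniq⟩ := hcov c hc
    exact ⟨T, ⟨hT, hcT⟩, fun T' h => huniq T' h.1 h.2⟩
  subset := hsub
  card_tile := hcard
  conn := fun T hT => (connectedIn_iff_connB T).mpr (hconn T hT)

def tilingA : Tiling 6 6 3 :=
  mkTiling tilesA (by decide) (by decide) (by decide) (by decide)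

def tilingB : Tiling 6 6 3 :=
  mkTiling tilesB (by decide) (by decide) (by decide) (by decide)

set_option maxHeartbeats 12000000 in
lemma lockedA_adj : ∀ T1 ∈ tilesA, ∀ T2 ∈ tilesA, T1 ≠ T2 →
    (∃ a ∈ T1, ∃ b ∈ T2, Adj a b) →
    ∀ S1 ∈ (T1 ∪ T2).powersetCard 3, ConnB S1 → ConnB ((T1 ∪ T2) \ S1) →
      ({S1, (T1 ∪ T2) \ S1} : Finset (Finset (ℕ × ℕ))) = {T1, T2} := by
  decide

lemma lockedA : Locked tilingA := by
  intro T1 h1 T2 h2 hne S1 S2 hc1 hc2 hconn1 hconn2 hdisj hun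
  have hS1sub : S1 ⊆ T1 ∪ T2 := hun ▸ Finset.subset_union_left
  have hS2sub : S2 ⊆ T1 ∪ T2 := hun ▸ Finset.subset_union_right
  have hS2eq : S2 = (T1 ∪ T2) \ S1 := by
    rw [← hun, Finset.union_sdiff_cancel_left hdisj]
  by_cases hadj : ∃ a ∈ T1, ∃ b ∈ T2, Adj a b
  · have := lockedA_adj T1 h1 T2 h2 hne hadj S1
      (Finset.mem_powersetCard.mpr ⟨hS1sub, hc1⟩)
      ((connectedIn_iff_connB S1).mp hconn1)
      ((connectedIn_iff_connB _).mp (hS2eq ▸ hconn2))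
    rw [hS2eq]
    exact this
  · -- non-adjacent tiles: each connected piece lies in one tile
    push_neg at hadj
    have hcT1 : T1.card = 3 := tilingA.card_tile T1 h1
    have hcT2 : T2.card = 3 := tilingA.card_tile T2 h2
    have key : ∀ S : Finset (ℕ × ℕ), S ⊆ T1 ∪ T2 → S.card = 3 → ConnectedIn S →
        S = T1 ∨ S = T2 := by
      intro S hsub hc hconn
      rcases nonadj_split hadj hsub hconn with h | h
      · exact Or.inl (Finset.eq_of_subset_of_card_le h (by omega))
      · exact Or.inr (Finset.eq_of_subset_of_card_le h (by omega))
    have hS1ne : S1.Nonempty := Finset.card_pos.mp (by omega)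
    rcases key S1 hS1sub hc1 hconn1 with e1 | e1 <;>
      rcases key S2 hS2sub hc2 hconn2 with e2 | e2
    · exfalso
      have h0 : T1 = ∅ := by rw [e1, e2] at hdisj; simpa using hdisj
      rw [e1, h0] at hc1; simp at hc1
    · rw [e1, e2]
    · rw [e1, e2, Finset.pair_comm]
    · exfalso
      have h0 : T2 = ∅ := by rw [e1, e2] at hdisj; simpa using hdisj
      rw [e1, h0] at hc1; simp at hc1

/-- There is a locked 3-omino tiling of the 6×6 grid, and the 6×6 grid admits more than
one 3-omino tiling. -/
theorem stmt_11 :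
    ∃ T : Tiling 6 6 3, Locked T ∧ ∃ T' : Tiling 6 6 3, T'.tiles ≠ T.tiles := by
  refine ⟨tilingA, lockedA, tilingB, ?_⟩
  show tilesB ≠ tilesA
  decide
end
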